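/- arXiv:math/9705219 — 8 statements merged into one kernel-verified Lean document; each statement's English description precedes it below -/
import Mathlib

section
/- Let Σ be a finite simplicial complex with at least one nonempty face. If D(Σ) admits a perfect matching M such that the digraph D_M(Σ) contains no directed cycle, then Σ is collapsible. -/
open Finset

/-- `K` is a finite abstract simplicial complex: contains the empty face and is
closed under taking subsets. -/
def IsComplex {α : Type} [DecidableEq α] (K : Finset (Finset α)) : Prop :=
  ∅ ∈ K ∧ ∀ s ∈ K, ∀ t ⊆ s, t ∈ K

/-- A (downward) edge `σ → τ` of the digraph `D(K)`. -/
def DEdge {α : Type} [DecidableEq α] (K : Finset (Finset α)) (σ τ : Finset α) : Prop :=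
  σ ∈ K ∧ τ ∈ K ∧ τ ⊆ σ ∧ σ.card = τ.card + 1

/-- `M` is a matching on `D(K)`: a set of edges of `D(K)` such that every face of `K`
occurs in at most one pair of `M`. -/
def IsMatching {α : Type} [DecidableEq α] (K : Finset (Finset α))
    (M : Finset (Finset α × Finset α)) : Prop :=
  (∀ p ∈ M, DEdge K p.1 p.2) ∧
    ∀ p ∈ M, ∀ q ∈ M, (p.1 = q.1 ∨ p.1 = q.2 ∨ p.2 = q.1 ∨ p.2 = q.2) → p = q

/-- `M` is a perfect matching on `D(K)`: every face of `K` occurs in exactly one pair. -/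
def IsPerfectMatching {α : Type} [DecidableEq α] (K : Finset (Finset α))
    (M : Finset (Finset α × Finset α)) : Prop :=
  IsMatching K M ∧ ∀ σ ∈ K, ∃ p ∈ M, σ = p.1 ∨ σ = p.2

/-- An edge `σ → τ` of the digraph `D_M(K)`, obtained from `D(K)` by reversing the
edges in `M`. -/
def DMEdge {α : Type} [DecidableEq α] (K : Finset (Finset α))
    (M : Finset (Finset α × Finset α)) (σ τ : Finset α) : Prop :=
  (DEdge K σ τ ∧ (σ, τ) ∉ M) ∨ ((τ, σ) ∈ M ∧ DEdge K τ σ)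

/-- `D_M(K)` contains a directed cycle `F 0 → F 1 → ⋯ → F r → F 0`. -/
def HasDirectedCycle {α : Type} [DecidableEq α] (K : Finset (Finset α))
    (M : Finset (Finset α × Finset α)) : Prop :=
  ∃ (r : ℕ) (F : Fin (r + 1) → Finset α),
    (∀ i : Fin r, DMEdge K M (F i.castSucc) (F i.succ)) ∧
      DMEdge K M (F (Fin.last r)) (F 0)

/-- `τ` is a maximal face of `K`. -/
def IsMaximalFace {α : Type} [DecidableEq α] (K : Finset (Finset α)) (τ : Finset α) : Prop :=
  τ ∈ K ∧ ∀ ρ ∈ K, τ ⊆ ρ → ρ = τ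

/-- `σ` is a free face of `K`: not maximal and contained in a unique maximal face. -/
def IsFreeFace {α : Type} [DecidableEq α] (K : Finset (Finset α)) (σ : Finset α) : Prop :=
  σ ∈ K ∧ ¬ IsMaximalFace K σ ∧ ∃! τ : Finset α, IsMaximalFace K τ ∧ σ ⊆ τ

open scoped Classical in
/-- `K'` is obtained from `K` by an elementary collapse. -/
def CollapseStep {α : Type} [DecidableEq α] (K K' : Finset (Finset α)) : Prop :=
  ∃ σ : Finset α, IsFreeFace K σ ∧ K' = K.filter (fun τ => ¬ σ ⊆ τ)

/-- `K` is collapsible: a sequence of elementary collapses reduces it to a single vertex. -/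
def Collapsible {α : Type} [DecidableEq α] (K : Finset (Finset α)) : Prop :=
  ∃ v : α, Relation.ReflTransGen CollapseStep K ({∅, {v}} : Finset (Finset α))

lemma collapse_aux {α : Type} [DecidableEq α] :
    ∀ (n : ℕ) (K : Finset (Finset α)) (M : Finset (Finset α × Finset α)),
      K.card ≤ n → IsComplex K → (∃ s ∈ K, s ≠ ∅) →
      IsPerfectMatching K M → ¬ HasDirectedCycle K M → Collapsible K := by
  intro n
  induction n with
  | zero =>
    intro K M hcard hK _ _ _
    exact absurd (Finset.card_eq_zero.mp (Nat.le_zero.mp hcard) ▸ hK.1) (Finset.notMem_empty ∅)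
  | succ n ih =>
    intro K M hcard hK hne hM hacyclic
    classical
    -- the empty face is matched upward to a vertex
    obtain ⟨p₀, hp₀M, hp₀⟩ := hM.2 ∅ hK.1
    have hp₀D := hM.1.1 p₀ hp₀M
    have hp₀2 : p₀.2 = ∅ := by
      rcases hp₀ with h | h
      · exfalso
        have := hp₀D.2.2.2
        rw [← h] at this
        simp at this
      · exact h.symm
    have hp₀card : p₀.1.card = 1 := by
      have := hp₀D.2.2.2
      rw [hp₀2] at this; simpa using this
    -- maximal cardinality face
    obtain ⟨σ₀, hσ₀K, hσ₀max⟩ := K.exists_max_image Finset.card ⟨∅, hK.1⟩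
    set d := σ₀.card with hd
    have hd1 : 1 ≤ d := by
      obtain ⟨s, hsK, hsne⟩ := hne
      have := hσ₀max s hsK
      have : 1 ≤ s.card := Finset.card_pos.mpr (Finset.nonempty_iff_ne_empty.mpr hsne)
      omega
    by_cases hd2 : 2 ≤ d
    · -- main case: find a free pair of top dimension
      have hfree : ∃ σ τ, σ ∈ K ∧ σ.card = d ∧ (σ, τ) ∈ M ∧
          ∀ ρ ∈ K, τ ⊆ ρ → ρ = σ ∨ ρ = τ := by
        by_contra hc
        push_neg at hc
        have keyU : ∀ σ : Finset α, ∃ τ ρ : Finset α, (σ ∈ K ∧ σ.card = d) →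
            ((σ, τ) ∈ M ∧ ρ ∈ K ∧ ρ.card = d ∧ τ ⊆ ρ ∧ ρ ≠ σ) := by
          intro σ
          by_cases hσ : σ ∈ K ∧ σ.card = d
          · obtain ⟨p, hpM, hp⟩ := hM.2 σ hσ.1
            have hpD := hM.1.1 p hpM
            have hσp : σ = p.1 := by
              rcases hp with h | h
              · exact h
              · exfalso
                have h1 := hσ₀max p.1 hpD.1
                have h2 := hpD.2.2.2
                rw [← h] at h2
                have h3 := hσ.2
                omega
            have hpM' : (σ, p.2) ∈ M := by rw [hσp]; exact hpM
            obtain ⟨ρ, hρK, hρsub, hρσ, hρτ⟩ := hc σ p.2 hσ.1 hσ.2 hpM'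
            refine ⟨p.2, ρ, fun _ => ⟨hpM', hρK, ?_, hρsub, hρσ⟩⟩
            have hss : p.2 ⊂ ρ := ⟨hρsub, fun h => hρτ (Finset.Subset.antisymm h hρsub)⟩
            have h1 := Finset.card_lt_card hss
            have h2 := hσ₀max ρ hρK
            have h3 := hpD.2.2.2
            have h4 := hσ.2
            rw [← hσp] at h3
            omega
          · exact ⟨∅, ∅, fun h => absurd h hσ⟩
        choose τf σf hf using keyU
        set ρseq : ℕ → Finset α := fun t => σf^[t] σ₀ with hρseq
        have hinv : ∀ t, ρseq t ∈ K ∧ (ρseq t).card = d := by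
          intro t
          induction t with
          | zero => exact ⟨hσ₀K, rfl⟩
          | succ t iht =>
            have h := hf (ρseq t) iht
            have : ρseq (t+1) = σf (ρseq t) := Function.iterate_succ_apply' σf t σ₀
            rw [this]
            exact ⟨h.2.1, h.2.2.1⟩
        have hpair : ∀ t, (ρseq t, τf (ρseq t)) ∈ M := fun t => (hf (ρseq t) (hinv t)).1
        have hsucc : ∀ t, ρseq (t+1) = σf (ρseq t) := fun t => Function.iterate_succ_apply' σf t σ₀
        have hstep : ∀ t, τf (ρseq t) ⊆ ρseq (t+1) ∧ ρseq (t+1) ≠ ρseq t := by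
          intro t
          have h := hf (ρseq t) (hinv t)
          rw [hsucc t]
          exact ⟨h.2.2.2.1, h.2.2.2.2⟩
        -- pigeonhole
        obtain ⟨a, _, b, _, hab, heq⟩ :=
          Finset.exists_ne_map_eq_of_card_lt_of_maps_to
            (s := Finset.range (K.card + 1)) (t := K)
            (by simp) (fun t _ => (hinv t).1)
        wlog hlt : a < b generalizing a b
        · exact this b ‹_› a ‹_› hab.symm heq.symm (by omega)
        -- build a directed cycle
        have edge1 : ∀ m, DMEdge K M (ρseq (m+1)) (τf (ρseq m)) := by
          intro m
          left
          have hDm := hM.1.1 _ (hpair m)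
          refine ⟨⟨(hinv (m+1)).1, hDm.2.1, (hstep m).1, ?_⟩, ?_⟩
          · have e1 := (hinv (m+1)).2
            have e2 := (hinv m).2
            have e3 : (ρseq m).card = (τf (ρseq m)).card + 1 := hDm.2.2.2
            omega
          · intro hmem
            have := hM.1.2 _ hmem _ (hpair m) (by right; right; right; rfl)
            have : ρseq (m+1) = ρseq m := congrArg Prod.fst this
            exact (hstep m).2 this
        have edge2 : ∀ m, DMEdge K M (τf (ρseq m)) (ρseq m) :=
          fun m => Or.inr ⟨hpair m, hM.1.1 _ (hpair m)⟩
        apply hacyclic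
        refine ⟨2 * (b - a) - 1, fun m =>
          if m.val % 2 = 0 then ρseq (b - m.val / 2) else τf (ρseq (b - m.val / 2 - 1)),
          ?_, ?_⟩
        · intro i
          have hi : (i : ℕ) < 2 * (b - a) - 1 := i.isLt
          simp only [Fin.coe_castSucc, Fin.val_succ]
          rcases Nat.even_or_odd (i : ℕ) with ⟨s, hs⟩ | ⟨s, hs⟩
          · rw [if_pos (show (i : ℕ) % 2 = 0 by omega),
              if_neg (show ¬ ((i : ℕ) + 1) % 2 = 0 by omega)]
            rw [show b - (i : ℕ) / 2 = (b - ((i : ℕ) + 1) / 2 - 1) + 1 by omega]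
            exact edge1 _
          · rw [if_neg (show ¬ (i : ℕ) % 2 = 0 by omega),
              if_pos (show ((i : ℕ) + 1) % 2 = 0 by omega)]
            rw [show b - ((i : ℕ) + 1) / 2 = b - (i : ℕ) / 2 - 1 by omega]
            exact edge2 _
        · simp only [Fin.val_last, Fin.val_zero]
          rw [if_neg (show ¬ (2 * (b - a) - 1) % 2 = 0 by omega),
            if_pos trivial]
          rw [show b - (2 * (b - a) - 1) / 2 - 1 = a by omega,
            show b - 0 / 2 = b by omega, ← heq]
          exact edge2 a
      obtain ⟨σs, τs, hσsK, hσscard, hMs, huniq⟩ := hfree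
      have hDs := hM.1.1 _ hMs
      have hτsK : τs ∈ K := hDs.2.1
      have hτsub : τs ⊆ σs := hDs.2.2.1
      have hcards : σs.card = τs.card + 1 := hDs.2.2.2
      have hτne : τs ≠ ∅ := by
        intro h
        rw [h] at hcards
        simp at hcards
        omega
      have hτnσ : τs ≠ σs := fun h => by rw [h] at hcards; omega
      have hσmax : IsMaximalFace K σs := by
        refine ⟨hσsK, fun ρ hρ hsub => (Finset.eq_of_subset_of_card_le hsub ?_).symm⟩
        have := hσ₀max ρ hρ
        omega
      have hfreeface : IsFreeFace K τs := by
        refine ⟨hτsK, ?_, σs, ⟨hσmax, hτsub⟩, ?_⟩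
        · intro hmax
          exact hτnσ (hmax.2 σs hσsK hτsub).symm
        · rintro μ ⟨hμmax, hμsub⟩
          rcases huniq μ hμmax.1 hμsub with h | h
          · exact h
          · exfalso
            have h2 : σs = μ := hμmax.2 σs hσsK (by rw [h]; exact hτsub)
            rw [h] at h2
            exact hτnσ h2.symm
      -- membership characterization of the collapse
      have hmemiff : ∀ ρ, ρ ∈ K → (τs ⊆ ρ ↔ ρ = σs ∨ ρ = τs) := by
        intro ρ hρ
        constructor
        · exact huniq ρ hρ
        · rintro (rfl | rfl)
          · exact hτsub
          · exact Finset.Subset.refl _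
      set K' := K.filter (fun ρ => ¬ τs ⊆ ρ) with hK'def
      have hK'mem : ∀ ρ, ρ ∈ K' ↔ ρ ∈ K ∧ ¬ τs ⊆ ρ := by
        intro ρ; simp [hK'def, Finset.mem_filter]
      have hcstep : CollapseStep K K' := by
        refine ⟨τs, hfreeface, ?_⟩
        ext ρ
        simp [Finset.mem_filter, hK'def]
      have hσsnotin : σs ∉ K' := fun h => ((hK'mem σs).1 h).2 hτsub
      have hK'sub : K' ⊆ K := Finset.filter_subset _ _
      have hK'lt : K'.card < K.card :=
        Finset.card_lt_card ⟨hK'sub, fun hsub => hσsnotin (hsub hσsK)⟩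
      have hK'complex : IsComplex K' := by
        constructor
        · exact (hK'mem ∅).2 ⟨hK.1, fun h => hτne (Finset.subset_empty.mp h)⟩
        · intro s hs t ht
          obtain ⟨hsK, hsns⟩ := (hK'mem s).1 hs
          exact (hK'mem t).2 ⟨hK.2 s hsK t ht, fun h => hsns (h.trans ht)⟩
      have hne' : ∃ s ∈ K', s ≠ ∅ := by
        refine ⟨p₀.1, ?_, ?_⟩
        · refine (hK'mem p₀.1).2 ⟨hp₀D.1, fun h => ?_⟩
          rcases (hmemiff p₀.1 hp₀D.1).1 h with h1 | h1
          · rw [h1] at hp₀card; omega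
          · have heqp : p₀ = (σs, τs) :=
              hM.1.2 p₀ hp₀M (σs, τs) hMs (Or.inr (Or.inl h1))
            have h2 : p₀.2 = τs := by rw [heqp]
            rw [hp₀2] at h2
            exact hτne h2.symm
        · intro h
          rw [h] at hp₀card; simp at hp₀card
      set M' := M.erase (σs, τs) with hM'def
      have hM'sub : ∀ p ∈ M', p ∈ M := fun p hp => Finset.mem_of_mem_erase hp
      have havoid : ∀ p ∈ M', p.1 ≠ σs ∧ p.1 ≠ τs ∧ p.2 ≠ σs ∧ p.2 ≠ τs := by
        intro p hp
        have hpM := hM'sub p hp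
        have hpne : p ≠ (σs, τs) := Finset.ne_of_mem_erase hp
        refine ⟨fun h => hpne (hM.1.2 p hpM (σs, τs) hMs (Or.inl h)),
          fun h => hpne (hM.1.2 p hpM (σs, τs) hMs (Or.inr (Or.inl h))),
          fun h => hpne (hM.1.2 p hpM (σs, τs) hMs (Or.inr (Or.inr (Or.inl h)))),
          fun h => hpne (hM.1.2 p hpM (σs, τs) hMs (Or.inr (Or.inr (Or.inr h))))⟩
      have hmemK' : ∀ p ∈ M', p.1 ∈ K' ∧ p.2 ∈ K' := by
        intro p hp
        have hD := hM.1.1 p (hM'sub p hp)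
        obtain ⟨h1, h2, h3, h4⟩ := havoid p hp
        constructor
        · refine (hK'mem p.1).2 ⟨hD.1, fun h => ?_⟩
          rcases (hmemiff p.1 hD.1).1 h with h' | h'
          · exact h1 h'
          · exact h2 h'
        · refine (hK'mem p.2).2 ⟨hD.2.1, fun h => ?_⟩
          rcases (hmemiff p.2 hD.2.1).1 h with h' | h'
          · exact h3 h'
          · exact h4 h'
      have hM'perfect : IsPerfectMatching K' M' := by
        refine ⟨⟨?_, ?_⟩, ?_⟩
        · intro p hp
          have hD := hM.1.1 p (hM'sub p hp)
          obtain ⟨hm1, hm2⟩ := hmemK' p hp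
          exact ⟨hm1, hm2, hD.2.2.1, hD.2.2.2⟩
        · intro p hp q hq h
          exact hM.1.2 p (hM'sub p hp) q (hM'sub q hq) h
        · intro σ hσ
          obtain ⟨hσK2, hσn⟩ := (hK'mem σ).1 hσ
          obtain ⟨p, hpM, hp⟩ := hM.2 σ hσK2
          refine ⟨p, Finset.mem_erase.mpr ⟨fun h => ?_, hpM⟩, hp⟩
          rw [h] at hp
          rcases hp with h' | h'
          · apply hσn; rw [h']; exact hτsub
          · apply hσn; rw [h']
      have hacyclic' : ¬ HasDirectedCycle K' M' := by
        rintro ⟨r, F, h1, h2⟩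
        have hmono : ∀ a b : Finset α, DMEdge K' M' a b → DMEdge K M a b := by
          intro a b hab
          rcases hab with ⟨hD, hnm⟩ | ⟨hm, hD⟩
          · left
            have haK := (hK'mem a).1 hD.1
            have hbK := (hK'mem b).1 hD.2.1
            refine ⟨⟨haK.1, hbK.1, hD.2.2.1, hD.2.2.2⟩, fun hab' => ?_⟩
            have heqab : (a, b) = (σs, τs) := by
              by_contra hne2
              exact hnm (Finset.mem_erase.mpr ⟨hne2, hab'⟩)
            have ha : a = σs := congrArg Prod.fst heqab
            apply haK.2; rw [ha]; exact hτsub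
          · right
            have hbK := (hK'mem b).1 hD.1
            have haK := (hK'mem a).1 hD.2.1
            exact ⟨hM'sub _ hm, hbK.1, haK.1, hD.2.2.1, hD.2.2.2⟩
        exact hacyclic ⟨r, F, fun i => hmono _ _ (h1 i), hmono _ _ h2⟩
      obtain ⟨v, hsteps⟩ := ih K' M' (by omega) hK'complex hne' hM'perfect hacyclic'
      exact ⟨v, Relation.ReflTransGen.head hcstep hsteps⟩
    · -- base case: every face is a vertex or empty, so K = {∅, {v}}
      push_neg at hd2
      obtain ⟨s, hsK, hsne⟩ := hne
      have hscard : s.card = 1 := by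
        have h1 := hσ₀max s hsK
        have h2 : 1 ≤ s.card := Finset.card_pos.mpr (Finset.nonempty_iff_ne_empty.mpr hsne)
        omega
      obtain ⟨v, rfl⟩ := Finset.card_eq_one.mp hscard
      have key1 : ∀ t ∈ K, t ≠ ∅ → t = p₀.1 := by
        intro t htK hte
        have htc : t.card = 1 := by
          have h1 := hσ₀max t htK
          have h2 : 1 ≤ t.card := Finset.card_pos.mpr (Finset.nonempty_iff_ne_empty.mpr hte)
          omega
        obtain ⟨q, hqM, hq⟩ := hM.2 t htK
        have hqD := hM.1.1 q hqM
        have hqt : t = q.1 := by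
          rcases hq with h | h
          · exact h
          · exfalso
            have h1 := hσ₀max q.1 hqD.1
            have h2 := hqD.2.2.2
            rw [← h] at h2
            omega
        have hq2 : q.2 = ∅ := by
          have h2 := hqD.2.2.2
          rw [← hqt] at h2
          exact Finset.card_eq_zero.mp (by omega)
        have hqp : q = p₀ := hM.1.2 q hqM p₀ hp₀M (by
          right; right; right; rw [hq2, hp₀2])
        rw [hqt, hqp]
      have hKeq : K = {∅, {v}} := by
        ext t
        simp only [Finset.mem_insert, Finset.mem_singleton]
        constructor
        · intro ht
          by_cases hte : t = ∅
          · exact Or.inl hte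
          · right
            rw [key1 t ht hte, ← key1 {v} hsK (Finset.singleton_ne_empty v)]
        · rintro (rfl | rfl)
          · exact hK.1
          · exact hsK
      exact ⟨v, by rw [hKeq]⟩

/-- If `D(K)` admits a perfect matching `M` such that `D_M(K)` is acyclic,
then `K` is collapsible. -/
theorem collapsible_of_acyclic_perfect_matching {α : Type} [DecidableEq α]
    (K : Finset (Finset α)) (M : Finset (Finset α × Finset α))
    (hK : IsComplex K) (hne : ∃ s ∈ K, s ≠ ∅)
    (hM : IsPerfectMatching K M) (hacyclic : ¬ HasDirectedCycle K M) :
    Collapsible K :=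
  collapse_aux K.card K M le_rfl hK hne hM hacyclic
end

section
/- For all integers n ≥ 3 and 2 ≤ k ≤ n−1, the sum of (−1)^{|E|} over all sets E of 2-element subsets of [n] = {1,…,n} such that the graph ([n], E) is not 2-connected and every edge of E containing the vertex 1 has its other endpoint in {2,…,k}, equals 0. (This is the Euler-characteristic consequence of the lemma that the complex Δ(k) of such graphs is contractible.) -/
/-!
The signed count of all graphs on `[n]` whose edges at `1` end in `K = {2,…,k}` vanishes
(toggle an edge avoiding `1`), so it suffices that the signed count of the 2-connected ones
vanishes as soon as some vertex is barred from being a neighbour of `1`. This goes by induction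
on the number of vertices. Toggling an edge `1t` with `t ∈ K` cancels everything except the
graphs `E` that are not 2-connected while `E + 1t` is. Such an `E` is a chain of blocks from `1`
to `t`: cutting off its end block `B ∋ 1` at the cut vertex `c` leaves a chain `C` from `c` to
`t`, and `B` and `C` vary independently. If `C` has at least three vertices, toggling the edge
`ct` cancels the sum over `C`; otherwise `C` is the edge `ct`, `B` lives on `[n] ∖ {t}`, and the
sum over `B` vanishes by induction.
-/

open Finset

/-- The simple graph on `Fin n` determined by a set `E` of edges (2-element subsets).
Vertex `i ∈ [n] = {1,…,n}` is represented by `(⟨i-1, _⟩ : Fin n)`. -/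
def graphOf (n : ℕ) (E : Finset (Finset (Fin n))) : SimpleGraph (Fin n) where
  Adj u v := u ≠ v ∧ ({u, v} : Finset (Fin n)) ∈ E
  symm := ⟨by
    rintro u v ⟨h1, h2⟩
    exact ⟨h1.symm, by rwa [Finset.pair_comm]⟩⟩
  loopless := ⟨fun u h => h.1 rfl⟩

/-- `E` is a set of 2-element subsets of `[n]`. -/
def IsGraphEdges (n : ℕ) (E : Finset (Finset (Fin n))) : Prop := ∀ e ∈ E, e.card = 2

/-- A graph on a finite vertex type is 2-connected. -/
def IsTwoConn {V : Type} [Fintype V] (G : SimpleGraph V) : Prop :=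
  2 ≤ Fintype.card V ∧ G.Connected ∧
    ∀ v : V, (G.induce ({v}ᶜ : Set V)).Connected

namespace Finset

variable {α : Type*} [DecidableEq α] {s : Finset α} {a b x y : α}

theorem exists_ne_ne_of_three_le_card (hs : 3 ≤ #s) (a b : α) :
    ∃ w ∈ s, w ≠ a ∧ w ≠ b := by
  obtain ⟨w, hw, hwab⟩ := exists_mem_notMem_of_card_lt_card
    (lt_of_le_of_lt (card_le_two (a := a) (b := b)) hs)
  exact ⟨w, hw, fun h => hwab (by simp [h]), fun h => hwab (by simp [h])⟩

theorem eq_and_eq_or_of_pair_eq_pair (he : ({x, y} : Finset α) = {a, b}) (hxy : x ≠ y) :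
    (x = a ∧ y = b) ∨ (x = b ∧ y = a) := by
  have hx : x ∈ ({a, b} : Finset α) := he ▸ mem_insert_self x {y}
  have hy : y ∈ ({a, b} : Finset α) := he ▸ mem_insert_of_mem (mem_singleton_self y)
  simp only [mem_insert, mem_singleton] at hx hy
  rcases hx with rfl | rfl <;> rcases hy with rfl | rfl <;> simp_all

end Finset

section SignedSums

variable {β : Type*} [DecidableEq β] {A : Finset β} {a : β}

theorem sum_powerset_filter_of_imp_insert (P : Finset β → Prop) [DecidablePred P] (ha : a ∈ A)
    (hP : ∀ E ⊆ A.erase a, P E → P (insert a E)) :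
    ∑ E ∈ A.powerset with P E, (-1 : ℤ) ^ #E =
      -∑ E ∈ (A.erase a).powerset with ¬ P E ∧ P (insert a E), (-1 : ℤ) ^ #E := by
  have hna := notMem_erase a A
  conv_lhs => rw [← insert_erase ha, sum_filter, sum_powerset_insert hna]
  rw [sum_filter, ← sum_add_distrib, ← sum_neg_distrib]
  refine sum_congr rfl fun E hE => ?_
  have hE' := mem_powerset.1 hE
  rw [card_insert_of_notMem fun h => hna (hE' h), pow_succ]
  by_cases h1 : P E
  · simp [h1, hP E hE' h1]
  · by_cases h2 : P (insert a E) <;> simp [h1, h2]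

theorem sum_powerset_filter_eq_zero (P : Finset β → Prop) [DecidablePred P] (ha : a ∈ A)
    (hP : ∀ E ⊆ A.erase a, P E ↔ P (insert a E)) :
    ∑ E ∈ A.powerset with P E, (-1 : ℤ) ^ #E = 0 := by
  rw [sum_powerset_filter_of_imp_insert P ha fun E hE => (hP E hE).1, neg_eq_zero,
    filter_false_of_mem fun E hE h => h.1 ((hP E (mem_powerset.1 hE)).2 h.2), sum_empty]

end SignedSums

theorem SimpleGraph.induce_reachable_iff {α : Type*} (G : SimpleGraph α) (s : Set α) {x y : s} :
    (G.induce s).Reachable x y ↔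
      Relation.ReflTransGen (fun a b => a ∈ s ∧ b ∈ s ∧ G.Adj a b) x y := by
  rw [SimpleGraph.reachable_iff_reflTransGen]
  constructor
  · intro h
    induction h with
    | refl => exact .refl
    | @tail b c _ hbc ih => exact ih.tail ⟨b.2, c.2, hbc⟩
  · suffices ∀ {b : α} (hb : b ∈ s),
        Relation.ReflTransGen (fun a b => a ∈ s ∧ b ∈ s ∧ G.Adj a b) x b →
          Relation.ReflTransGen (G.induce s).Adj x ⟨b, hb⟩ from this y.2
    intro b hb h
    induction h with
    | refl => exact .refl
    | tail _ hbc ih => exact (ih hbc.1).tail hbc.2.2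

namespace EdgeSet

section

variable {α : Type*} [DecidableEq α]

def Adj (E : Finset (Finset α)) (a b : α) : Prop := a ≠ b ∧ {a, b} ∈ E

def Reach (E : Finset (Finset α)) (s : Finset α) : α → α → Prop :=
  Relation.ReflTransGen fun a b => a ∈ s ∧ b ∈ s ∧ Adj E a b

def Connected (E : Finset (Finset α)) (s : Finset α) : Prop :=
  s.Nonempty ∧ ∀ u ∈ s, ∀ v ∈ s, Reach E s u v

def TwoConnected (E : Finset (Finset α)) (s : Finset α) : Prop :=
  2 ≤ #s ∧ Connected E s ∧ ∀ v ∈ s, Connected E (s.erase v)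

def NeighborsSubset (E : Finset (Finset α)) (r : α) (K : Finset α) : Prop :=
  ∀ e ∈ E, r ∈ e → e ⊆ insert r K

open scoped Classical in
noncomputable def component (E : Finset (Finset α)) (s : Finset α) (w : α) : Finset α :=
  s.filter (Reach E s w)

open scoped Classical in
noncomputable def cutVertices (E : Finset (Finset α)) (V : Finset α) : Finset α :=
  V.filter fun c => ¬ Connected E (V.erase c)

variable {E E' : Finset (Finset α)} {s s' S A : Finset α} {f : Finset α} {a b c x y w : α}

theorem Adj.symm (h : Adj E a b) : Adj E b a := ⟨h.1.symm, pair_comm a b ▸ h.2⟩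

theorem Adj.mono (hE : E ⊆ E') (h : Adj E a b) : Adj E' a b := ⟨h.1, hE h.2⟩

theorem Adj.reach (ha : a ∈ s) (hb : b ∈ s) (h : Adj E a b) : Reach E s a b :=
  .single ⟨ha, hb, h⟩

namespace Reach

protected theorem rfl : Reach E s a a := .refl

protected theorem trans (h : Reach E s a b) (h' : Reach E s b c) : Reach E s a c :=
  Relation.ReflTransGen.trans h h'

protected theorem symm (h : Reach E s a b) : Reach E s b a := by
  induction h with
  | refl => exact .refl
  | tail _ hbc ih => exact Relation.ReflTransGen.head ⟨hbc.2.1, hbc.1, hbc.2.2.symm⟩ ih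

theorem mono (hE : E ⊆ E') (hs : s ⊆ s') (h : Reach E s a b) : Reach E' s' a b := by
  induction h with
  | refl => exact .rfl
  | tail _ hst ih => exact ih.trans (Adj.reach (hs hst.1) (hs hst.2.1) (hst.2.2.mono hE))

theorem mem_of_closed (hA : ∀ a ∈ A, ∀ b ∈ s, Adj E a b → b ∈ A) (ha : a ∈ A)
    (h : Reach E s a b) : b ∈ A := by
  induction h with
  | refl => exact ha
  | tail _ hbc ih => exact hA _ ih _ hbc.2.1 hbc.2.2

end Reach

theorem reach_filter_iff (hs : s ⊆ S) : Reach (E.filter (· ⊆ S)) s a b ↔ Reach E s a b := by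
  refine ⟨Reach.mono (filter_subset _ _) subset_rfl, fun h => ?_⟩
  induction h with
  | refl => exact .rfl
  | tail _ hst ih =>
    obtain ⟨hx, hy, hxy, he⟩ := hst
    exact ih.trans (Adj.reach hx hy
      ⟨hxy, mem_filter.2 ⟨he, insert_subset (hs hx) (singleton_subset_iff.2 (hs hy))⟩⟩)

namespace Reach

theorem of_insert (hf : ¬ f ⊆ s) (h : Reach (insert f E) s a b) : Reach E s a b := by
  rw [← reach_filter_iff subset_rfl, filter_insert, if_neg hf] at h
  exact h.mono (filter_subset _ _) subset_rfl

theorem erase (hf : ¬ f ⊆ s) (h : Reach E s a b) : Reach (E.erase f) s a b := by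
  rw [← reach_filter_iff subset_rfl] at h
  refine h.mono (fun e he => mem_erase.2 ⟨?_, (mem_filter.1 he).1⟩) subset_rfl
  rintro rfl
  exact hf (mem_filter.1 he).2

theorem of_insert_pair (h : Reach (insert {a, b} E) s x y)
    (hab : a ∈ s → b ∈ s → Reach E s a b) : Reach E s x y := by
  induction h with
  | refl => exact .rfl
  | tail _ hst ih =>
    obtain ⟨hp, hq, hpq, he⟩ := hst
    rcases mem_insert.1 he with he | he
    · rcases eq_and_eq_or_of_pair_eq_pair he hpq with ⟨rfl, rfl⟩ | ⟨rfl, rfl⟩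
      · exact ih.trans (hab hp hq)
      · exact ih.trans (hab hq hp).symm
    · exact ih.trans (Adj.reach hp hq ⟨hpq, he⟩)

/-- A walk from `a` using the extra edge `ab` can be cut at its last use of that edge. -/
theorem of_insert_pair_left (h : Reach (insert {a, b} E) s a x) :
    Reach E s a x ∨ Reach E s b x := by
  induction h with
  | refl => exact .inl .rfl
  | tail _ hst ih =>
    obtain ⟨hp, hq, hpq, he⟩ := hst
    rcases mem_insert.1 he with he | he
    · rcases eq_and_eq_or_of_pair_eq_pair he hpq with ⟨rfl, rfl⟩ | ⟨rfl, rfl⟩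
      · exact .inr .rfl
      · exact .inl .rfl
    · have hstep := Adj.reach hp hq ⟨hpq, he⟩
      exact ih.imp (·.trans hstep) (·.trans hstep)

/-- The second clause, about walks that have left `insert c A`, is the invariant that lets
the induction along the walk go through. -/
theorem confine (hA : ∀ a ∈ A, ∀ b ∈ s, Adj E a b → b ∈ insert c A)
    (hx : x ∈ insert c A) (h : Reach E s x y) :
    (y ∈ insert c A → Reach E (insert c A) x y) ∧
      (y ∉ insert c A → Reach E (insert c A) x c) := by
  induction h with
  | refl => exact ⟨fun _ => .rfl, fun hy => absurd hx hy⟩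
  | @tail p q _ hst ih =>
    obtain ⟨hp, hq, hpq⟩ := hst
    by_cases hpA : p ∈ insert c A <;> by_cases hqA : q ∈ insert c A
    · exact ⟨fun _ => (ih.1 hpA).trans (Adj.reach hpA hqA hpq), fun h => absurd hqA h⟩
    · rcases mem_insert.1 hpA with rfl | hpA'
      · exact ⟨fun h => absurd h hqA, fun _ => ih.1 hpA⟩
      · exact absurd (hA p hpA' q hq hpq) hqA
    · rcases mem_insert.1 hqA with rfl | hqA'
      · exact ⟨fun _ => ih.2 hpA, fun h => absurd hqA h⟩
      · exact absurd (hA q hqA' p hp hpq.symm) hpA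
    · exact ⟨fun h => absurd h hqA, fun _ => ih.2 hpA⟩

end Reach

theorem connected_of_reach (hw : w ∈ s) (h : ∀ u ∈ s, Reach E s u w) : Connected E s :=
  ⟨⟨w, hw⟩, fun u hu v hv => (h u hu).trans (h v hv).symm⟩

theorem connected_filter_iff (hs : s ⊆ S) :
    Connected (E.filter (· ⊆ S)) s ↔ Connected E s := by
  simp only [Connected, reach_filter_iff hs]

namespace Connected

theorem mono (hE : E ⊆ E') (h : Connected E s) : Connected E' s :=
  ⟨h.1, fun u hu v hv => (h.2 u hu v hv).mono hE subset_rfl⟩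

theorem of_insert (hf : ¬ f ⊆ s) (h : Connected (insert f E) s) : Connected E s :=
  ⟨h.1, fun u hu v hv => (h.2 u hu v hv).of_insert hf⟩

theorem union (hs : Connected E s) (hs' : Connected E s') (hw : w ∈ s) (hw' : w ∈ s') :
    Connected E (s ∪ s') := by
  refine connected_of_reach (mem_union_left _ hw) fun u hu => ?_
  rcases mem_union.1 hu with hu | hu
  · exact (hs.2 u hu w hw).mono subset_rfl subset_union_left
  · exact (hs'.2 u hu w hw').mono subset_rfl subset_union_right

theorem confine (h : Connected E s) (hA : ∀ a ∈ A, ∀ b ∈ s, Adj E a b → b ∈ insert c A)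
    (hAs : insert c A ⊆ s) : Connected E (insert c A) :=
  ⟨⟨c, mem_insert_self c A⟩, fun x hx y hy =>
    (Reach.confine hA hx (h.2 x (hAs hx) y (hAs hy))).1 hy⟩

end Connected

theorem TwoConnected.mono (hE : E ⊆ E') (h : TwoConnected E s) : TwoConnected E' s :=
  ⟨h.1, h.2.1.mono hE, fun v hv => (h.2.2 v hv).mono hE⟩

theorem TwoConnected.connected_erase_pair {t : α} (h : TwoConnected E s) (hs : 3 ≤ #s)
    (hc : c ∈ s) (ht : t ∈ s) (hct : c ≠ t) : Connected (E.erase {c, t}) s := by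
  obtain ⟨w, hw, hwc, hwt⟩ := exists_ne_ne_of_three_le_card hs c t
  refine connected_of_reach hw fun u hu => ?_
  by_cases huc : u = c
  · subst huc
    refine (((h.2.2 t ht).2 u (mem_erase.2 ⟨hct, hu⟩) w (mem_erase.2 ⟨hwt, hw⟩)).erase
      ?_).mono subset_rfl (erase_subset _ _)
    simp [insert_subset_iff]
  · refine (((h.2.2 c hc).2 u (mem_erase.2 ⟨huc, hu⟩) w (mem_erase.2 ⟨hwc, hw⟩)).erase
      ?_).mono subset_rfl (erase_subset _ _)
    simp [insert_subset_iff]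

theorem NeighborsSubset.not_connected {r : α} {K : Finset α} (h : NeighborsSubset E r K)
    (hK : ∀ x ∈ K, x ∉ s.erase r) (hr : r ∈ s) (hx : x ∈ s) (hxr : x ≠ r) :
    ¬ Connected E s := by
  intro hconn
  rcases (hconn.2 r hr x hx).cases_head with h | ⟨z, ⟨-, hz, hrz, he⟩, -⟩
  · exact hxr h.symm
  · have : z ∈ insert r K :=
      h _ he (mem_insert_self r {z}) (mem_insert_of_mem (mem_singleton_self z))
    rcases mem_insert.1 this with rfl | hzK
    · exact hrz rfl
    · exact hK z hzK (mem_erase.2 ⟨hrz.symm, hz⟩)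

theorem mem_component : x ∈ component E s w ↔ x ∈ s ∧ Reach E s w x := by
  classical
  simp [component]

theorem self_mem_component (hw : w ∈ s) : w ∈ component E s w := mem_component.2 ⟨hw, .rfl⟩

theorem component_subset : component E s w ⊆ s := fun _ hx => (mem_component.1 hx).1

theorem Reach.component (h : Reach E s w x) : Reach E (component E s w) w x := by
  induction h with
  | refl => exact .rfl
  | @tail p q hp hst ih =>
    exact ih.trans (Adj.reach (mem_component.2 ⟨hst.1, hp⟩)
      (mem_component.2 ⟨hst.2.1, hp.tail hst⟩) hst.2.2)

theorem connected_component (hw : w ∈ s) : Connected E (component E s w) :=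
  connected_of_reach (self_mem_component hw) fun _ hu => (mem_component.1 hu).2.component.symm

theorem component_closed (ha : a ∈ component E s w) (hb : b ∈ s) (hab : Adj E a b) :
    b ∈ component E s w :=
  mem_component.2 ⟨hb, (mem_component.1 ha).2.tail ⟨(mem_component.1 ha).1, hb, hab⟩⟩

theorem component_erase_closed {V : Finset α} (ha : a ∈ component E (V.erase c) w) (hb : b ∈ V)
    (hab : Adj E a b) : b ∈ insert c (component E (V.erase c) w) := by
  by_cases hbc : b = c
  · exact hbc ▸ mem_insert_self _ _
  · exact mem_insert_of_mem (component_closed ha (mem_erase.2 ⟨hbc, hb⟩) hab)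

theorem component_subset_component (h : component E s w ⊆ s') :
    component E s w ⊆ component E s' w :=
  fun _ hx => mem_component.2 ⟨h hx, (mem_component.1 hx).2.component.mono subset_rfl h⟩

theorem component_erase_subset_component_erase {V : Finset α} {c' : α}
    (h : c' ∉ component E (V.erase c) w) :
    component E (V.erase c) w ⊆ component E (V.erase c') w :=
  component_subset_component fun _ hx =>
    mem_erase.2 ⟨fun hxc => h (hxc ▸ hx), mem_of_mem_erase (component_subset hx)⟩

/-- A common component would be closed in `V`, hence contain `c`. -/
theorem component_erase_ne {V : Finset α} {c' : α} (hconn : Connected E V) (hw : w ∈ V)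
    (hwc : w ≠ c) (hc : c ∈ V) (hcc : c ≠ c') :
    component E (V.erase c) w ≠ component E (V.erase c') w := by
  intro heq
  have hclosed : ∀ a ∈ component E (V.erase c) w, ∀ b ∈ V, Adj E a b →
      b ∈ component E (V.erase c) w := by
    intro a ha b hb hab
    by_cases hbc : b = c
    · exact heq ▸ component_closed (heq ▸ ha) (mem_erase.2 ⟨hbc ▸ hcc, hb⟩) hab
    · exact component_closed ha (mem_erase.2 ⟨hbc, hb⟩) hab
  have := (hconn.2 w hw c hc).mem_of_closed hclosed (self_mem_component (mem_erase.2 ⟨hwc, hw⟩))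
  exact (mem_erase.1 (component_subset this)).1 rfl

theorem mem_cutVertices {V : Finset α} :
    c ∈ cutVertices E V ↔ c ∈ V ∧ ¬ Connected E (V.erase c) := by
  classical
  simp [cutVertices]

end

section

variable {α : Type*} [DecidableEq α]

structure AlmostTwoConnected (V : Finset α) (r t : α) (E : Finset (Finset α)) : Prop where
  r_mem : r ∈ V
  t_mem : t ∈ V
  r_ne_t : r ≠ t
  three_le_card : 3 ≤ #V
  subset : E ⊆ V.powersetCard 2
  not_twoConnected : ¬ TwoConnected E V
  twoConnected_insert : TwoConnected (insert {r, t} E) V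

def IsMinCut (E : Finset (Finset α)) (V : Finset α) (r c : α) : Prop :=
  c ∈ cutVertices E V ∧
    ∀ c' ∈ cutVertices E V, #(component E (V.erase c) r) ≤ #(component E (V.erase c') r)

namespace AlmostTwoConnected

variable {V : Finset α} {r t c c' v x : α} {E : Finset (Finset α)} {e : Finset α}

theorem connected_erase_left (h : AlmostTwoConnected V r t E) : Connected E (V.erase r) :=
  (h.twoConnected_insert.2.2 r h.r_mem).of_insert (by simp [insert_subset_iff])

theorem connected_erase_right (h : AlmostTwoConnected V r t E) : Connected E (V.erase t) :=
  (h.twoConnected_insert.2.2 t h.t_mem).of_insert (by simp [insert_subset_iff])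

theorem connected (h : AlmostTwoConnected V r t E) : Connected E V := by
  obtain ⟨w, hw, hwr, hwt⟩ := exists_ne_ne_of_three_le_card h.three_le_card r t
  have hV : V.erase r ∪ V.erase t = V := by
    ext x
    by_cases hx : x = r <;> simp [hx, h.r_ne_t]
  exact hV ▸ h.connected_erase_left.union h.connected_erase_right (mem_erase.2 ⟨hwr, hw⟩)
    (mem_erase.2 ⟨hwt, hw⟩)

theorem cutVertices_nonempty (h : AlmostTwoConnected V r t E) : (cutVertices E V).Nonempty := by
  by_contra hne
  refine h.not_twoConnected ⟨by linarith [h.three_le_card], h.connected, fun v hv => ?_⟩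
  by_contra hv'
  exact hne ⟨v, mem_cutVertices.2 ⟨hv, hv'⟩⟩

theorem ne_left_of_mem_cutVertices (h : AlmostTwoConnected V r t E)
    (hc : c ∈ cutVertices E V) : c ≠ r := by
  rintro rfl
  exact (mem_cutVertices.1 hc).2 h.connected_erase_left

theorem ne_right_of_mem_cutVertices (h : AlmostTwoConnected V r t E)
    (hc : c ∈ cutVertices E V) : c ≠ t := by
  rintro rfl
  exact (mem_cutVertices.1 hc).2 h.connected_erase_right

theorem mem_component_or_mem_component (h : AlmostTwoConnected V r t E)
    (hc : c ∈ cutVertices E V) (hx : x ∈ V.erase c) :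
    x ∈ component E (V.erase c) r ∨ x ∈ component E (V.erase c) t := by
  have hr : r ∈ V.erase c := mem_erase.2 ⟨(h.ne_left_of_mem_cutVertices hc).symm, h.r_mem⟩
  exact ((h.twoConnected_insert.2.2 c (mem_cutVertices.1 hc).1).2 r hr x
    hx).of_insert_pair_left.imp (mem_component.2 ⟨hx, ·⟩) (mem_component.2 ⟨hx, ·⟩)

theorem notMem_component_right (h : AlmostTwoConnected V r t E) (hc : c ∈ cutVertices E V)
    (hx : x ∈ component E (V.erase c) r) : x ∉ component E (V.erase c) t := by
  intro hx'
  have hr : r ∈ V.erase c := mem_erase.2 ⟨(h.ne_left_of_mem_cutVertices hc).symm, h.r_mem⟩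
  refine (mem_cutVertices.1 hc).2 (connected_of_reach hr fun u hu => ?_)
  rcases h.mem_component_or_mem_component hc hu with hu | hu
  · exact (mem_component.1 hu).2.symm
  · exact (mem_component.1 hu).2.symm.trans
      ((mem_component.1 hx').2.trans (mem_component.1 hx).2.symm)

theorem component_ssubset_or (h : AlmostTwoConnected V r t E) (hc : c ∈ cutVertices E V)
    (hc' : c' ∈ cutVertices E V) (hne : c ≠ c') :
    component E (V.erase c) r ⊂ component E (V.erase c') r ∨
      component E (V.erase c') r ⊂ component E (V.erase c) r := by
  have hcV := (mem_cutVertices.1 hc).1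
  by_cases h1 : c' ∈ component E (V.erase c) r
  · by_cases h2 : c ∈ component E (V.erase c') r
    · exact absurd (subset_antisymm
        (component_erase_subset_component_erase (h.notMem_component_right hc h1))
        (component_erase_subset_component_erase (h.notMem_component_right hc' h2)))
        (component_erase_ne h.connected h.t_mem (h.ne_right_of_mem_cutVertices hc).symm hcV hne)
    · exact .inr ((ssubset_iff_of_subset (component_erase_subset_component_erase h2)).2
        ⟨c', h1, fun h' => (mem_erase.1 (component_subset h')).1 rfl⟩)
  · exact .inl (Finset.ssubset_iff_subset_ne.2 ⟨component_erase_subset_component_erase h1,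
      component_erase_ne h.connected h.r_mem (h.ne_left_of_mem_cutVertices hc).symm hcV hne⟩)

theorem exists_isMinCut (h : AlmostTwoConnected V r t E) : ∃ c, IsMinCut E V r c := by
  obtain ⟨c, hc, hmin⟩ := exists_min_image (cutVertices E V)
    (fun c => #(component E (V.erase c) r)) h.cutVertices_nonempty
  exact ⟨c, hc, hmin⟩

theorem isMinCut_unique (h : AlmostTwoConnected V r t E) (hc : IsMinCut E V r c)
    (hc' : IsMinCut E V r c') : c = c' := by
  by_contra hne
  rcases h.component_ssubset_or hc.1 hc'.1 hne with hs | hs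
  · exact (card_lt_card hs).not_ge (hc'.2 c hc.1)
  · exact (card_lt_card hs).not_ge (hc.2 c' hc'.1)

theorem connected_erase_of_mem_component (h : AlmostTwoConnected V r t E) (hc : IsMinCut E V r c)
    (hv : v ∈ component E (V.erase c) r) : Connected E (V.erase v) := by
  by_contra hconn
  have hv' : v ∈ cutVertices E V :=
    mem_cutVertices.2 ⟨mem_of_mem_erase (component_subset hv), hconn⟩
  rcases h.component_ssubset_or hc.1 hv' (mem_erase.1 (component_subset hv)).1.symm with hs | hs
  · exact (mem_erase.1 (component_subset (hs.1 hv))).1 rfl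
  · exact (card_lt_card hs).not_ge (hc.2 v hv')

theorem sdiff_insert_component (h : AlmostTwoConnected V r t E) (hc : c ∈ cutVertices E V) :
    V \ insert c (component E (V.erase c) r) = component E (V.erase c) t := by
  ext x
  simp only [mem_sdiff, mem_insert, not_or]
  constructor
  · rintro ⟨hx, hxc, hxC⟩
    exact (h.mem_component_or_mem_component hc (mem_erase.2 ⟨hxc, hx⟩)).resolve_left hxC
  · intro hx
    obtain ⟨hxc, hxV⟩ := mem_erase.1 (component_subset hx)
    exact ⟨hxV, hxc, fun hC => h.notMem_component_right hc hC hx⟩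

theorem subset_or_subset (h : AlmostTwoConnected V r t E) (he : e ∈ E) :
    e ⊆ insert c (component E (V.erase c) r) ∨
      e ⊆ insert c (V \ insert c (component E (V.erase c) r)) := by
  obtain ⟨heV, hcard⟩ := mem_powersetCard.1 (h.subset he)
  obtain ⟨x, y, hxy, rfl⟩ := card_eq_two.1 hcard
  have hx : x ∈ V := heV (mem_insert_self x {y})
  have hy : y ∈ V := heV (mem_insert_of_mem (mem_singleton_self y))
  have hadj : Adj E x y := ⟨hxy, he⟩
  by_cases hxC : x ∈ component E (V.erase c) r
  · exact .inl (insert_subset (mem_insert_of_mem hxC)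
      (singleton_subset_iff.2 (component_erase_closed hxC hy hadj)))
  by_cases hyC : y ∈ component E (V.erase c) r
  · exact .inl (insert_subset (component_erase_closed hyC hx hadj.symm)
      (singleton_subset_iff.2 (mem_insert_of_mem hyC)))
  have hmem : ∀ z ∈ V, z ∉ component E (V.erase c) r →
      z ∈ insert c (V \ insert c (component E (V.erase c) r)) := by
    intro z hz hzC
    by_cases hzc : z = c <;> simp_all
  exact .inr (insert_subset (hmem x hx hxC) (singleton_subset_iff.2 (hmem y hy hyC)))

theorem twoConnected_filter_left (h : AlmostTwoConnected V r t E) (hc : IsMinCut E V r c) :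
    TwoConnected (E.filter (· ⊆ insert c (component E (V.erase c) r)))
      (insert c (component E (V.erase c) r)) := by
  set C := component E (V.erase c) r
  have hcV : c ∈ V := (mem_cutVertices.1 hc.1).1
  have hrV : r ∈ V.erase c := mem_erase.2 ⟨(h.ne_left_of_mem_cutVertices hc.1).symm, h.r_mem⟩
  have hcC : c ∉ C := fun h' => (mem_erase.1 (component_subset h')).1 rfl
  have hCV : insert c C ⊆ V :=
    insert_subset hcV fun _ hx => mem_of_mem_erase (component_subset hx)
  refine ⟨?_, (connected_filter_iff subset_rfl).2
    (h.connected.confine (fun _ ha _ hb hab => component_erase_closed ha hb hab) hCV),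
    fun v hv => (connected_filter_iff (erase_subset _ _)).2 ?_⟩
  · rw [card_insert_of_notMem hcC]
    exact Nat.succ_le_succ (card_pos.2 ⟨r, self_mem_component hrV⟩)
  rcases mem_insert.1 hv with rfl | hvC
  · rw [erase_insert hcC]
    exact connected_component hrV
  have hvc : c ≠ v := fun hcv => hcC (hcv ▸ hvC)
  rw [erase_insert_of_ne hvc]
  refine (h.connected_erase_of_mem_component hc hvC).confine (fun a ha b hb hab => ?_) ?_
  · exact mem_insert.2 ((mem_insert.1 (component_erase_closed (mem_of_mem_erase ha)
      (mem_of_mem_erase hb) hab)).imp_right fun h' => mem_erase.2 ⟨(mem_erase.1 hb).1, h'⟩)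
  · exact insert_subset (mem_erase.2 ⟨hvc, hcV⟩)
      fun _ hx => mem_erase.2
        ⟨(mem_erase.1 hx).1, hCV (mem_insert_of_mem (mem_of_mem_erase hx))⟩

theorem connected_filter_right (h : AlmostTwoConnected V r t E) (hc : c ∈ cutVertices E V) :
    Connected (E.filter (· ⊆ insert c (component E (V.erase c) t)))
      (insert c (component E (V.erase c) t)) :=
  (connected_filter_iff subset_rfl).2 (h.connected.confine
    (fun _ ha _ hb hab => component_erase_closed ha hb hab)
    (insert_subset (mem_cutVertices.1 hc).1 fun _ hx => mem_of_mem_erase (component_subset hx)))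

/-- Removing a vertex `v` on the `t`-side: every remaining vertex there reaches `c`, either
directly or through `t` and the new edge `ct`, which replaces the detour through `rt`. -/
theorem connected_insert_erase (h : AlmostTwoConnected V r t E) (hc : c ∈ cutVertices E V)
    (hv : v ∈ component E (V.erase c) t) :
    Connected (insert {c, t} E) (insert c ((component E (V.erase c) t).erase v)) := by
  set D := component E (V.erase c) t
  have hcV : c ∈ V := (mem_cutVertices.1 hc).1
  have hvc : v ≠ c := (mem_erase.1 (component_subset hv)).1
  have hclosed :
      ∀ a ∈ D.erase v, ∀ b ∈ V.erase v, Adj E a b → b ∈ insert c (D.erase v) :=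
    fun a ha b hb hab => mem_insert.2 ((mem_insert.1 (component_erase_closed (mem_of_mem_erase ha)
      (mem_of_mem_erase hb) hab)).imp_right fun h' => mem_erase.2 ⟨(mem_erase.1 hb).1, h'⟩)
  have hsub : insert c (D.erase v) ⊆ V.erase v := insert_subset (mem_erase.2 ⟨hvc.symm, hcV⟩)
    fun _ hx => mem_erase.2
      ⟨(mem_erase.1 hx).1, mem_of_mem_erase (component_subset (mem_of_mem_erase hx))⟩
  by_cases hvt : v = t
  · subst hvt
    exact (h.connected_erase_right.confine hclosed hsub).mono (subset_insert _ _)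
  have htD : t ∈ insert c (D.erase v) := mem_insert_of_mem (mem_erase.2 ⟨Ne.symm hvt,
    self_mem_component (mem_erase.2 ⟨(h.ne_right_of_mem_cutVertices hc).symm, h.t_mem⟩)⟩)
  have hrC : r ∈ component E (V.erase c) r :=
    self_mem_component (mem_erase.2 ⟨(h.ne_left_of_mem_cutVertices hc).symm, h.r_mem⟩)
  have hrD : r ∉ insert c (D.erase v) := by
    simp only [mem_insert, mem_erase, not_or]
    exact ⟨(h.ne_left_of_mem_cutVertices hc).symm,
      fun ⟨_, h'⟩ => h.notMem_component_right hc hrC h'⟩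
  have hct : Adj (insert {c, t} E) c t :=
    ⟨h.ne_right_of_mem_cutVertices hc, mem_insert_self _ _⟩
  refine connected_of_reach (mem_insert_self c _) fun x hx => ?_
  have hrv : r ∈ V.erase v :=
    mem_erase.2 ⟨fun hrv => h.notMem_component_right hc hrC (hrv ▸ hv), h.r_mem⟩
  rcases ((h.twoConnected_insert.2.2 v (mem_of_mem_erase (component_subset hv))).2 r hrv x
    (hsub hx)).of_insert_pair_left with hrx | htx
  · exact ((Reach.confine hclosed hx hrx.symm).2 hrD).mono (subset_insert _ _) subset_rfl
  · exact (((Reach.confine hclosed htD htx).1 hx).symm.mono (subset_insert _ _) subset_rfl).trans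
      (Adj.reach htD (mem_insert_self c _) hct.symm)

theorem twoConnected_insert_filter_right (h : AlmostTwoConnected V r t E)
    (hc : c ∈ cutVertices E V) :
    TwoConnected (insert {c, t} (E.filter (· ⊆ insert c (component E (V.erase c) t))))
      (insert c (component E (V.erase c) t)) := by
  set D := component E (V.erase c) t
  have hcD : c ∉ D := fun h' => (mem_erase.1 (component_subset h')).1 rfl
  have htV : t ∈ V.erase c := mem_erase.2 ⟨(h.ne_right_of_mem_cutVertices hc).symm, h.t_mem⟩
  refine ⟨?_, (h.connected_filter_right hc).mono (subset_insert _ _), fun v hv => ?_⟩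
  · rw [card_insert_of_notMem hcD]
    exact Nat.succ_le_succ (card_pos.2 ⟨t, self_mem_component htV⟩)
  rcases mem_insert.1 hv with rfl | hvD
  · rw [erase_insert hcD]
    exact ((connected_filter_iff (subset_insert _ _)).2 (connected_component htV)).mono
      (subset_insert _ _)
  have hvc : v ≠ c := (mem_erase.1 (component_subset hvD)).1
  rw [erase_insert_of_ne hvc.symm]
  have hA : insert c (D.erase v) ⊆ insert c D := insert_subset_insert c (erase_subset v D)
  refine ((connected_filter_iff hA).2 (h.connected_insert_erase hc hvD)).mono fun e he => ?_
  simp only [mem_filter, mem_insert] at he ⊢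
  tauto

end AlmostTwoConnected

end

section

variable {α : Type*}

/-- `S` is the vertex set of a would-be end block containing `r`, attached at `c` to the rest
of the graph, which lives on `insert c (V \ S)` and contains `t`. -/
structure BlockSplit (V : Finset α) (r t c : α) (S : Finset α) : Prop where
  subset : S ⊆ V
  r_mem : r ∈ S
  c_mem : c ∈ S
  c_ne_r : c ≠ r
  t_mem : t ∈ V
  t_notMem : t ∉ S

namespace BlockSplit

variable {V S : Finset α} {r t c : α}

theorem c_ne_t (hS : BlockSplit V r t c S) : c ≠ t := fun h => hS.t_notMem (h ▸ hS.c_mem)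

theorem r_ne_t (hS : BlockSplit V r t c S) : r ≠ t := fun h => hS.t_notMem (h ▸ hS.r_mem)

theorem three_le_card (hS : BlockSplit V r t c S) : 3 ≤ #V :=
  two_lt_card_iff.2 ⟨r, c, t, hS.subset hS.r_mem, hS.subset hS.c_mem, hS.t_mem, hS.c_ne_r.symm,
    hS.r_ne_t, hS.c_ne_t⟩

end BlockSplit

variable [DecidableEq α]

structure Gluing (V : Finset α) (r t c : α) (S : Finset α) (B C : Finset (Finset α)) : Prop
    extends BlockSplit V r t c S where
  subset_left : B ⊆ S.powersetCard 2
  subset_right : C ⊆ (insert c (V \ S)).powersetCard 2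
  twoConnected_left : TwoConnected B S
  connected_right : Connected C (insert c (V \ S))
  twoConnected_insert_right : TwoConnected (insert {c, t} C) (insert c (V \ S))

namespace BlockSplit

variable {V S : Finset α} {r t c x : α} {e : Finset α}

theorem eq_of_mem_of_mem (hx : x ∈ S) (hx' : x ∈ insert c (V \ S)) : x = c := by
  simp_all

theorem r_notMem_right (hS : BlockSplit V r t c S) : r ∉ insert c (V \ S) :=
  fun h => hS.c_ne_r (eq_of_mem_of_mem hS.r_mem h).symm

theorem t_mem_right (hS : BlockSplit V r t c S) : t ∈ insert c (V \ S) :=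
  mem_insert_of_mem (mem_sdiff.2 ⟨hS.t_mem, hS.t_notMem⟩)

theorem right_subset (hS : BlockSplit V r t c S) : insert c (V \ S) ⊆ V :=
  insert_subset (hS.subset hS.c_mem) sdiff_subset

theorem union_right (hS : BlockSplit V r t c S) : S ∪ insert c (V \ S) = V := by
  rw [union_insert, union_sdiff_of_subset hS.subset, insert_eq_of_mem (hS.subset hS.c_mem)]

theorem not_subset_right (he : e ∈ S.powersetCard 2) : ¬ e ⊆ insert c (V \ S) := by
  intro he'
  obtain ⟨heS, hcard⟩ := mem_powersetCard.1 he
  have : e ⊆ {c} := fun x hx => mem_singleton.2 (eq_of_mem_of_mem (heS hx) (he' hx))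
  have := card_le_card this
  simp_all

theorem three_le_card_right (hS : BlockSplit V r t c S) (hne : S ≠ V.erase t) :
    3 ≤ #(insert c (V \ S)) := by
  obtain ⟨x, hx, hxS⟩ := not_subset.1 fun h => hne (subset_antisymm
    (fun y hy => mem_erase.2 ⟨fun hyt => hS.t_notMem (by rwa [← hyt]), hS.subset hy⟩) h)
  obtain ⟨hxt, hxV⟩ := mem_erase.1 hx
  exact two_lt_card_iff.2 ⟨c, t, x, mem_insert_self _ _, hS.t_mem_right,
    mem_insert_of_mem (mem_sdiff.2 ⟨hxV, hxS⟩), hS.c_ne_t, fun h => hxS (h ▸ hS.c_mem),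
    hxt.symm⟩

end BlockSplit

namespace Gluing

variable {V S : Finset α} {r t c v a b : α} {B C : Finset (Finset α)}

theorem mem_left_of_adj (g : Gluing V r t c S B C) (ha : a ∈ S) (hac : a ≠ c)
    (hab : Adj (B ∪ C) a b) : b ∈ S := by
  rcases mem_union.1 hab.2 with he | he
  · exact (mem_powersetCard.1 (g.subset_left he)).1 (mem_insert_of_mem (mem_singleton_self b))
  · exact absurd (BlockSplit.eq_of_mem_of_mem ha
      ((mem_powersetCard.1 (g.subset_right he)).1 (mem_insert_self a {b}))) hac

theorem connected_erase_of_mem_left (g : Gluing V r t c S B C) (hv : v ∈ S) (hvc : v ≠ c) :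
    Connected (B ∪ C) (V.erase v) := by
  have hsub : insert c (V \ S) ⊆ V.erase v := fun y hy => mem_erase.2
    ⟨fun hyv => hvc (BlockSplit.eq_of_mem_of_mem hv (hyv ▸ hy)), g.right_subset hy⟩
  refine connected_of_reach (mem_erase.2 ⟨hvc.symm, g.subset g.c_mem⟩) fun x hx => ?_
  by_cases hxS : x ∈ S
  · exact ((g.twoConnected_left.2.2 v hv).2 x (mem_erase.2 ⟨(mem_erase.1 hx).1, hxS⟩) c
      (mem_erase.2 ⟨hvc.symm, g.c_mem⟩)).mono subset_union_left
      fun y hy => mem_erase.2 ⟨(mem_erase.1 hy).1, g.subset (mem_of_mem_erase hy)⟩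
  · exact (g.connected_right.2 x (mem_insert_of_mem (mem_sdiff.2 ⟨mem_of_mem_erase hx, hxS⟩)) c
      (mem_insert_self _ _)).mono subset_union_right hsub

theorem connected (g : Gluing V r t c S B C) : Connected (B ∪ C) V :=
  g.union_right ▸ (g.twoConnected_left.2.1.mono subset_union_left).union
    (g.connected_right.mono subset_union_right) g.c_mem (mem_insert_self _ _)

theorem not_connected_erase (g : Gluing V r t c S B C) : ¬ Connected (B ∪ C) (V.erase c) := by
  intro hconn
  have hr : r ∈ S.erase c := mem_erase.2 ⟨g.c_ne_r.symm, g.r_mem⟩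
  have := (hconn.2 r (erase_subset_erase c g.subset hr) t
    (mem_erase.2 ⟨g.c_ne_t.symm, g.t_mem⟩)).mem_of_closed (fun a ha b hb hab =>
      mem_erase.2 ⟨(mem_erase.1 hb).1, g.mem_left_of_adj (mem_of_mem_erase ha)
        (mem_erase.1 ha).1 hab⟩) hr
  exact g.t_notMem (mem_of_mem_erase this)

theorem component_eq (g : Gluing V r t c S B C) :
    component (B ∪ C) (V.erase c) r = S.erase c := by
  have hr : r ∈ S.erase c := mem_erase.2 ⟨g.c_ne_r.symm, g.r_mem⟩
  have hsub : S.erase c ⊆ V.erase c := erase_subset_erase c g.subset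
  ext x
  refine ⟨fun hx => (mem_component.1 hx).2.mem_of_closed (fun a ha b hb hab =>
      mem_erase.2 ⟨(mem_erase.1 hb).1, g.mem_left_of_adj (mem_of_mem_erase ha)
        (mem_erase.1 ha).1 hab⟩) hr, fun hx => mem_component.2 ⟨hsub hx, ?_⟩⟩
  exact ((g.twoConnected_left.2.2 c g.c_mem).2 r hr x hx).mono subset_union_left hsub

theorem isMinCut (g : Gluing V r t c S B C) : IsMinCut (B ∪ C) V r c := by
  refine ⟨mem_cutVertices.2 ⟨g.subset g.c_mem, g.not_connected_erase⟩, fun c' hc' => ?_⟩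
  rw [g.component_eq]
  by_cases hcc : c' = c
  · rw [hcc, g.component_eq]
  have hc'S : c' ∉ S := fun h => (mem_cutVertices.1 hc').2 (g.connected_erase_of_mem_left h hcc)
  have hsub : S ⊆ V.erase c' :=
    fun y hy => mem_erase.2 ⟨fun h => hc'S (h ▸ hy), g.subset hy⟩
  calc #(S.erase c) ≤ #S := card_erase_le
    _ ≤ #(component (B ∪ C) (V.erase c') r) := card_le_card fun x hx =>
        mem_component.2 ⟨hsub hx,
          (g.twoConnected_left.2.1.2 r g.r_mem x hx).mono subset_union_left hsub⟩

theorem connected_erase_insert_self (g : Gluing V r t c S B C) :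
    Connected (insert {r, t} (B ∪ C)) (V.erase c) := by
  have hr : r ∈ V.erase c := mem_erase.2 ⟨g.c_ne_r.symm, g.subset g.r_mem⟩
  refine connected_of_reach hr fun x hx => ?_
  by_cases hxS : x ∈ S
  · exact ((g.twoConnected_left.2.2 c g.c_mem).2 x (mem_erase.2 ⟨(mem_erase.1 hx).1, hxS⟩) r
      (mem_erase.2 ⟨g.c_ne_r.symm, g.r_mem⟩)).mono (subset_union_left.trans (subset_insert _ _))
      (erase_subset_erase c g.subset)
  have hright : (insert c (V \ S)).erase c = V \ S :=
    erase_insert fun h => (mem_sdiff.1 h).2 g.c_mem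
  have hxt := ((g.twoConnected_insert_right.2.2 c (mem_insert_self _ _)).2 x
    (by rw [hright]; exact mem_sdiff.2 ⟨mem_of_mem_erase hx, hxS⟩) t
    (by rw [hright]; exact mem_sdiff.2 ⟨g.t_mem, g.t_notMem⟩)).of_insert
    (by simp [insert_subset_iff])
  exact (hxt.mono (subset_union_right.trans (subset_insert _ _))
    (erase_subset_erase c g.right_subset)).trans
    (Adj.reach (mem_erase.2 ⟨g.c_ne_t.symm, g.t_mem⟩) hr
      ⟨g.r_ne_t.symm, pair_comm r t ▸ mem_insert_self _ _⟩)

/-- Removing `v` from the chain side: inside the chain, the edge `ct` is replaced by a walk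
from `c` to `r` in the block followed by the edge `rt`. -/
theorem connected_erase_insert_of_notMem_left (g : Gluing V r t c S B C) (hv : v ∈ V)
    (hvS : v ∉ S) : Connected (insert {r, t} (B ∪ C)) (V.erase v) := by
  have hBF : B ⊆ insert {r, t} (B ∪ C) := subset_union_left.trans (subset_insert _ _)
  have hSv : S ⊆ V.erase v := fun y hy => mem_erase.2 ⟨fun h => hvS (h ▸ hy), g.subset hy⟩
  have hct :
      c ∈ V.erase v → t ∈ V.erase v → Reach (insert {r, t} (B ∪ C)) (V.erase v) c t :=
    fun _ ht => ((g.twoConnected_left.2.1.2 c g.c_mem r g.r_mem).mono hBF hSv).trans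
      (Adj.reach (hSv g.r_mem) ht ⟨g.r_ne_t, mem_insert_self _ _⟩)
  refine connected_of_reach (hSv g.c_mem) fun x hx => ?_
  by_cases hxS : x ∈ S
  · exact (g.twoConnected_left.2.1.2 x hxS c g.c_mem).mono hBF hSv
  have hx' : x ∈ (insert c (V \ S)).erase v := mem_erase.2
    ⟨(mem_erase.1 hx).1, mem_insert_of_mem (mem_sdiff.2 ⟨mem_of_mem_erase hx, hxS⟩)⟩
  have hc' : c ∈ (insert c (V \ S)).erase v :=
    mem_erase.2 ⟨fun h => hvS (h ▸ g.c_mem), mem_insert_self _ _⟩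
  exact (((g.twoConnected_insert_right.2.2 v (mem_insert_of_mem (mem_sdiff.2 ⟨hv, hvS⟩))).2
    x hx' c hc').mono (insert_subset_insert _ (subset_union_right.trans (subset_insert _ _)))
    (erase_subset_erase v g.right_subset)).of_insert_pair hct

theorem twoConnected_insert (g : Gluing V r t c S B C) :
    TwoConnected (insert {r, t} (B ∪ C)) V := by
  refine ⟨one_lt_card.2 ⟨r, g.subset g.r_mem, t, g.t_mem, g.r_ne_t⟩,
    g.connected.mono (subset_insert _ _), fun v hv => ?_⟩
  by_cases hvc : v = c
  · exact hvc ▸ g.connected_erase_insert_self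
  by_cases hvS : v ∈ S
  · exact (g.connected_erase_of_mem_left hvS hvc).mono (subset_insert _ _)
  · exact g.connected_erase_insert_of_notMem_left hv hvS

theorem almostTwoConnected (g : Gluing V r t c S B C) : AlmostTwoConnected V r t (B ∪ C) where
  r_mem := g.subset g.r_mem
  t_mem := g.t_mem
  r_ne_t := g.r_ne_t
  three_le_card := g.three_le_card
  subset := union_subset (g.subset_left.trans (powersetCard_mono g.subset))
    (g.subset_right.trans (powersetCard_mono g.right_subset))
  not_twoConnected h := g.not_connected_erase (h.2.2 c (g.subset g.c_mem))
  twoConnected_insert := g.twoConnected_insert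

theorem filter_left (g : Gluing V r t c S B C) : (B ∪ C).filter (· ⊆ S) = B := by
  ext e
  simp only [mem_filter, mem_union]
  refine ⟨fun ⟨he, heS⟩ => he.resolve_right fun heC => BlockSplit.not_subset_right
      (mem_powersetCard.2 ⟨heS, (mem_powersetCard.1 (g.subset_right heC)).2⟩)
      (mem_powersetCard.1 (g.subset_right heC)).1,
    fun he => ⟨.inl he, (mem_powersetCard.1 (g.subset_left he)).1⟩⟩

theorem filter_right (g : Gluing V r t c S B C) :
    (B ∪ C).filter (· ⊆ insert c (V \ S)) = C := by
  ext e
  simp only [mem_filter, mem_union]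
  exact ⟨fun ⟨he, heS⟩ => he.resolve_left fun heB => BlockSplit.not_subset_right
      (g.subset_left heB) heS,
    fun he => ⟨.inr he, (mem_powersetCard.1 (g.subset_right he)).1⟩⟩

theorem disjoint (g : Gluing V r t c S B C) : Disjoint B C :=
  disjoint_left.2 fun _ heB heC => BlockSplit.not_subset_right (g.subset_left heB)
    (mem_powersetCard.1 (g.subset_right heC)).1

end Gluing

namespace AlmostTwoConnected

variable {V : Finset α} {r t c : α} {E : Finset (Finset α)}

theorem gluing (h : AlmostTwoConnected V r t E) (hc : IsMinCut E V r c) :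
    Gluing V r t c (insert c (component E (V.erase c) r))
      (E.filter (· ⊆ insert c (component E (V.erase c) r)))
      (E.filter (· ⊆ insert c (V \ insert c (component E (V.erase c) r)))) where
  subset := insert_subset (mem_cutVertices.1 hc.1).1
    fun _ hx => mem_of_mem_erase (component_subset hx)
  r_mem := mem_insert_of_mem
    (self_mem_component (mem_erase.2 ⟨(h.ne_left_of_mem_cutVertices hc.1).symm, h.r_mem⟩))
  c_mem := mem_insert_self _ _
  c_ne_r := h.ne_left_of_mem_cutVertices hc.1
  t_mem := h.t_mem
  t_notMem := by
    rw [mem_insert, not_or]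
    exact ⟨(h.ne_right_of_mem_cutVertices hc.1).symm, fun ht => h.notMem_component_right hc.1 ht
      (self_mem_component (mem_erase.2 ⟨(h.ne_right_of_mem_cutVertices hc.1).symm, h.t_mem⟩))⟩
  subset_left _ he := mem_powersetCard.2
    ⟨(mem_filter.1 he).2, (mem_powersetCard.1 (h.subset (mem_filter.1 he).1)).2⟩
  subset_right _ he := mem_powersetCard.2
    ⟨(mem_filter.1 he).2, (mem_powersetCard.1 (h.subset (mem_filter.1 he).1)).2⟩
  twoConnected_left := h.twoConnected_filter_left hc
  connected_right := h.sdiff_insert_component hc.1 ▸ h.connected_filter_right hc.1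
  twoConnected_insert_right :=
    h.sdiff_insert_component hc.1 ▸ h.twoConnected_insert_filter_right hc.1

theorem filter_union_filter (h : AlmostTwoConnected V r t E) :
    E.filter (· ⊆ insert c (component E (V.erase c) r)) ∪
      E.filter (· ⊆ insert c (V \ insert c (component E (V.erase c) r))) = E := by
  rw [← filter_or]
  exact filter_true_of_mem fun _ he => h.subset_or_subset he

end AlmostTwoConnected

end

section

variable {α : Type*} [DecidableEq α]

open scoped Classical

noncomputable def twoConnectedGraphs (V : Finset α) (r : α) (K : Finset α) :
    Finset (Finset (Finset α)) :=
  (V.powersetCard 2).powerset.filter fun E => NeighborsSubset E r K ∧ TwoConnected E V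

/-- Chains of blocks from `c` to `t` covering `W`. -/
noncomputable def chainGraphs (W : Finset α) (c t : α) : Finset (Finset (Finset α)) :=
  (W.powersetCard 2).powerset.filter fun C => Connected C W ∧ TwoConnected (insert {c, t} C) W

noncomputable def almostTwoConnectedGraphs (V : Finset α) (r t : α) (K : Finset α) :
    Finset (Finset (Finset α)) :=
  ((V.powersetCard 2).erase {r, t}).powerset.filter fun E =>
    NeighborsSubset E r K ∧ ¬ TwoConnected E V ∧ TwoConnected (insert {r, t} E) V

noncomputable def minCut (E : Finset (Finset α)) (V : Finset α) (r : α) : α :=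
  if h : ∃ c, IsMinCut E V r c then h.choose else r

/-- The end block of `E` containing `r`, with its cut vertex. -/
noncomputable def endBlock (E : Finset (Finset α)) (V : Finset α) (r : α) : Finset α × α :=
  (insert (minCut E V r) (component E (V.erase (minCut E V r)) r), minCut E V r)

variable {V S K W : Finset α} {r t c : α} {E B C : Finset (Finset α)}

theorem pair_mem_powersetCard (ha : r ∈ V) (hb : t ∈ V) (hab : r ≠ t) :
    ({r, t} : Finset α) ∈ V.powersetCard 2 :=
  mem_powersetCard.2 ⟨insert_subset ha (singleton_subset_iff.2 hb), card_pair hab⟩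

theorem neighborsSubset_insert_iff (ht : t ∈ K) :
    NeighborsSubset (insert {r, t} E) r K ↔ NeighborsSubset E r K := by
  refine ⟨fun h e he => h e (mem_insert_of_mem he), fun h e he hre => ?_⟩
  rcases mem_insert.1 he with rfl | he
  · exact insert_subset_insert r (singleton_subset_iff.2 ht)
  · exact h e he hre

theorem AlmostTwoConnected.isMinCut_minCut (h : AlmostTwoConnected V r t E) :
    IsMinCut E V r (minCut E V r) := by
  rw [minCut, dif_pos h.exists_isMinCut]
  exact h.exists_isMinCut.choose_spec

theorem almostTwoConnected_of_mem (hr : r ∈ V) (ht : t ∈ V) (hrt : r ≠ t) (hV : 3 ≤ #V)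
    (hE : E ∈ almostTwoConnectedGraphs V r t K) : AlmostTwoConnected V r t E := by
  obtain ⟨hE, -, h1, h2⟩ := mem_filter.1 hE
  exact ⟨hr, ht, hrt, hV, (mem_powerset.1 hE).trans (erase_subset _ _), h1, h2⟩

theorem AlmostTwoConnected.blockSplit (h : AlmostTwoConnected V r t E)
    (hE : endBlock E V r = (S, c)) : BlockSplit V r t c S := by
  simp only [endBlock, Prod.mk.injEq] at hE
  obtain ⟨rfl, rfl⟩ := hE
  exact (h.gluing h.isMinCut_minCut).toBlockSplit

theorem gluing_of_mem_fiber (hS : BlockSplit V r t c S)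
    (hE : E ∈ almostTwoConnectedGraphs V r t K) (hES : endBlock E V r = (S, c)) :
    Gluing V r t c S (E.filter (· ⊆ S)) (E.filter (· ⊆ insert c (V \ S))) ∧
      E.filter (· ⊆ S) ∪ E.filter (· ⊆ insert c (V \ S)) = E := by
  have h := almostTwoConnected_of_mem (hS.subset hS.r_mem) hS.t_mem hS.r_ne_t hS.three_le_card hE
  simp only [endBlock, Prod.mk.injEq] at hES
  obtain ⟨rfl, rfl⟩ := hES
  exact ⟨h.gluing h.isMinCut_minCut, h.filter_union_filter⟩

theorem mem_fiber_of_gluing (g : Gluing V r t c S B C) (hB : NeighborsSubset B r K) :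
    B ∪ C ∈ (almostTwoConnectedGraphs V r t K).filter (endBlock · V r = (S, c)) := by
  have h := g.almostTwoConnected
  have hC : ∀ e ∈ C, r ∉ e := fun e he hre =>
    g.r_notMem_right ((mem_powersetCard.1 (g.subset_right he)).1 hre)
  refine mem_filter.2 ⟨mem_filter.2 ⟨mem_powerset.2 fun e he =>
    mem_erase.2 ⟨?_, h.subset he⟩, fun e he hre => ?_, h.not_twoConnected,
    h.twoConnected_insert⟩, ?_⟩
  · rintro rfl
    rcases mem_union.1 he with he | he
    · exact g.t_notMem ((mem_powersetCard.1 (g.subset_left he)).1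
        (mem_insert_of_mem (mem_singleton_self t)))
    · exact hC _ he (mem_insert_self r {t})
  · rcases mem_union.1 he with he | he
    · exact hB e he hre
    · exact absurd hre (hC e he)
  · simp only [endBlock, h.isMinCut_unique h.isMinCut_minCut g.isMinCut, g.component_eq,
      insert_erase g.c_mem]

theorem sum_fiber_eq_mul (hS : BlockSplit V r t c S) :
    ∑ E ∈ almostTwoConnectedGraphs V r t K with endBlock E V r = (S, c), (-1 : ℤ) ^ #E =
      (∑ B ∈ twoConnectedGraphs S r K, (-1 : ℤ) ^ #B) *
        ∑ C ∈ chainGraphs (insert c (V \ S)) c t, (-1 : ℤ) ^ #C := by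
  have gluing_of_mem_product :
      ∀ p ∈ twoConnectedGraphs S r K ×ˢ chainGraphs (insert c (V \ S)) c t,
        Gluing V r t c S p.1 p.2 ∧ NeighborsSubset p.1 r K := by
    intro p hp
    obtain ⟨hB, hC⟩ := mem_product.1 hp
    obtain ⟨hB, hBK, hBS⟩ := mem_filter.1 hB
    obtain ⟨hC, hCW, hCt⟩ := mem_filter.1 hC
    exact ⟨⟨hS, mem_powerset.1 hB, mem_powerset.1 hC, hBS, hCW, hCt⟩, hBK⟩
  rw [sum_mul_sum, ← sum_product']
  refine sum_nbij' (fun E => (E.filter (· ⊆ S), E.filter (· ⊆ insert c (V \ S))))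
    (fun p => p.1 ∪ p.2) (fun E hE => ?_) (fun p hp => ?_) (fun E hE => ?_) (fun p hp => ?_)
    (fun E hE => ?_)
  · obtain ⟨hE, hES⟩ := mem_filter.1 hE
    have g := (gluing_of_mem_fiber hS hE hES).1
    have hEK := (mem_filter.1 hE).2.1
    exact mem_product.2 ⟨mem_filter.2 ⟨mem_powerset.2 g.subset_left,
      fun e he => hEK e (mem_filter.1 he).1, g.twoConnected_left⟩,
      mem_filter.2 ⟨mem_powerset.2 g.subset_right, g.connected_right,
        g.twoConnected_insert_right⟩⟩
  · exact mem_fiber_of_gluing (gluing_of_mem_product p hp).1 (gluing_of_mem_product p hp).2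
  · obtain ⟨hE, hES⟩ := mem_filter.1 hE
    exact (gluing_of_mem_fiber hS hE hES).2
  · have g := (gluing_of_mem_product p hp).1
    exact Prod.ext g.filter_left g.filter_right
  · obtain ⟨hE', hES⟩ := mem_filter.1 hE
    obtain ⟨g, hunion⟩ := gluing_of_mem_fiber hS hE' hES
    rw [← pow_add, ← card_union_of_disjoint g.disjoint, hunion]

theorem sum_chainGraphs_eq_zero (hW : 3 ≤ #W) (hc : c ∈ W) (ht : t ∈ W) (hct : c ≠ t) :
    ∑ C ∈ chainGraphs W c t, (-1 : ℤ) ^ #C = 0 := by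
  refine sum_powerset_filter_eq_zero _ (pair_mem_powersetCard hc ht hct) fun C hC => ?_
  have hctC : {c, t} ∉ C := fun h => (mem_erase.1 (hC h)).1 rfl
  rw [insert_idem]
  exact ⟨fun h => ⟨h.1.mono (subset_insert _ _), h.2⟩,
    fun h => ⟨erase_insert hctC ▸ h.2.connected_erase_pair hW hc ht hct, h.2⟩⟩

theorem sum_twoConnectedGraphs_eq_neg (hr : r ∈ V) (ht : t ∈ V) (htr : t ≠ r)
    (htK : t ∈ K) :
    ∑ E ∈ twoConnectedGraphs V r K, (-1 : ℤ) ^ #E =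
      -∑ E ∈ almostTwoConnectedGraphs V r t K, (-1 : ℤ) ^ #E := by
  rw [twoConnectedGraphs, sum_powerset_filter_of_imp_insert _ (pair_mem_powersetCard hr ht htr.symm)
    fun E _ hE => ⟨(neighborsSubset_insert_iff htK).2 hE.1, hE.2.mono (subset_insert _ _)⟩,
    almostTwoConnectedGraphs]
  congr 2
  exact filter_congr fun E _ => by rw [neighborsSubset_insert_iff htK]; tauto

theorem sum_twoConnectedGraphs_eq_zero (hr : r ∈ V) (hK : ¬ V.erase r ⊆ K) :
    ∑ E ∈ twoConnectedGraphs V r K, (-1 : ℤ) ^ #E = 0 := by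
  induction V using Finset.strongInduction with
  | H V ih =>
  obtain ⟨u, hu, huK⟩ := not_subset.1 hK
  obtain ⟨hur, huV⟩ := mem_erase.1 hu
  by_cases hKV : ∃ t ∈ K, t ∈ V.erase r
  swap
  · simp only [not_exists, not_and] at hKV
    refine sum_eq_zero fun E hE => absurd (mem_filter.1 hE).2.2.2.1 ?_
    exact (mem_filter.1 hE).2.1.not_connected hKV hr huV hur
  obtain ⟨t, htK, ht⟩ := hKV
  obtain ⟨htr, htV⟩ := mem_erase.1 ht
  have hV : 3 ≤ #V := two_lt_card_iff.2 ⟨r, t, u, hr, htV, huV, htr.symm, hur.symm,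
    fun h => huK (h ▸ htK)⟩
  rw [sum_twoConnectedGraphs_eq_neg hr htV htr htK, neg_eq_zero,
    ← sum_fiberwise_of_maps_to fun E hE => mem_image_of_mem (endBlock · V r) hE]
  refine sum_eq_zero fun ⟨S, c⟩ hp => ?_
  obtain ⟨E, hE, hES⟩ := mem_image.1 hp
  have hS := (almostTwoConnected_of_mem hr htV htr.symm hV hE).blockSplit hES
  rw [sum_fiber_eq_mul hS]
  by_cases hSt : S = V.erase t
  · subst hSt
    rw [ih _ (erase_ssubset htV) (mem_erase.2 ⟨htr.symm, hr⟩) fun h => huK (h (mem_erase.2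
      ⟨hur, mem_erase.2 ⟨fun hut => huK (hut ▸ htK), huV⟩⟩)), zero_mul]
  · rw [sum_chainGraphs_eq_zero (hS.three_le_card_right hSt) (mem_insert_self _ _)
      hS.t_mem_right hS.c_ne_t, mul_zero]

theorem sum_not_twoConnected_eq_zero (hV : 3 ≤ #V) (hr : r ∈ V) (hK : ¬ V.erase r ⊆ K) :
    ∑ E ∈ (V.powersetCard 2).powerset with NeighborsSubset E r K ∧ ¬ TwoConnected E V,
      (-1 : ℤ) ^ #E = 0 := by
  obtain ⟨x, hx, y, hy, hxy⟩ := one_lt_card.1 (by rw [card_erase_of_mem hr]; omega :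
    1 < #(V.erase r))
  have hall :
      ∑ E ∈ (V.powersetCard 2).powerset with NeighborsSubset E r K, (-1 : ℤ) ^ #E = 0 := by
    refine sum_powerset_filter_eq_zero _
      (pair_mem_powersetCard (mem_of_mem_erase hx) (mem_of_mem_erase hy) hxy) fun E _ =>
        ⟨fun h e he hre => ?_, fun h e he => h e (mem_insert_of_mem he)⟩
    rcases mem_insert.1 he with rfl | he
    · simp only [mem_insert, mem_singleton] at hre
      rcases hre with rfl | rfl
      · exact absurd rfl (mem_erase.1 hx).1
      · exact absurd rfl (mem_erase.1 hy).1
    · exact h e he hre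
  have hsplit := sum_filter_add_sum_filter_not
    ((V.powersetCard 2).powerset.filter (NeighborsSubset · r K)) (TwoConnected · V)
    fun E => (-1 : ℤ) ^ #E
  rw [filter_filter, filter_filter, hall] at hsplit
  have h2 := sum_twoConnectedGraphs_eq_zero hr hK (K := K)
  rw [twoConnectedGraphs] at h2
  linarith

end

theorem connected_iff_induce {α : Type*} [DecidableEq α] {E : Finset (Finset α)}
    {G : SimpleGraph α} (hG : ∀ a b, G.Adj a b ↔ Adj E a b) (s : Finset α) :
    (G.induce (s : Set α)).Connected ↔ Connected E s := by
  have hR : ∀ x y : (s : Set α), (G.induce (s : Set α)).Reachable x y ↔ Reach E s x y := by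
    intro x y
    rw [SimpleGraph.induce_reachable_iff]
    simp only [mem_coe, hG]
    rfl
  rw [SimpleGraph.connected_iff, Connected]
  constructor
  · rintro ⟨hpre, ⟨x⟩⟩
    exact ⟨⟨x, x.2⟩, fun u hu v hv => (hR ⟨u, hu⟩ ⟨v, hv⟩).1 (hpre _ _)⟩
  · rintro ⟨⟨x, hx⟩, h⟩
    exact ⟨fun u v => (hR u v).2 (h u u.2 v v.2), ⟨⟨x, hx⟩⟩⟩

theorem isTwoConn_iff {α : Type} [Fintype α] [DecidableEq α] {E : Finset (Finset α)}
    {G : SimpleGraph α} (hG : ∀ a b, G.Adj a b ↔ Adj E a b) :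
    IsTwoConn G ↔ TwoConnected E univ := by
  have hcompl : ∀ v : α, ({v}ᶜ : Set α) = ↑(univ.erase v) := fun v => by ext; simp
  rw [IsTwoConn, TwoConnected, card_univ, ← (SimpleGraph.induceUnivIso G).connected_iff,
    ← coe_univ, connected_iff_induce hG]
  simp only [mem_univ, forall_const]
  refine and_congr Iff.rfl (and_congr Iff.rfl (forall_congr' fun v => ?_))
  rw [hcompl v, connected_iff_induce hG]

end EdgeSet

open scoped Classical in
/-- For `n ≥ 3` and `2 ≤ k ≤ n-1`, the sum of `(-1)^{|E|}` over all edge sets of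
not 2-connected graphs on `[n]` in which every edge containing the vertex `1` has
its other endpoint in `{2,…,k}` equals `0` (the complex `Δ(k)` is contractible). -/
theorem euler_char_delta_k (n k : ℕ) (hn : 3 ≤ n) (hkn : k ≤ n - 1) :
    ∑ E ∈ Finset.univ.filter
        (fun E : Finset (Finset (Fin n)) =>
          IsGraphEdges n E ∧
          ¬ IsTwoConn (graphOf n E) ∧
          ∀ e ∈ E, (⟨0, by omega⟩ : Fin n) ∈ e →
            ∀ x ∈ e, x ≠ (⟨0, by omega⟩ : Fin n) → 1 ≤ x.val ∧ x.val ≤ k - 1),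
      (-1 : ℤ) ^ E.card = 0 := by
  set r : Fin n := ⟨0, by omega⟩
  set K : Finset (Fin n) := univ.filter fun x : Fin n => 1 ≤ x.val ∧ x.val ≤ k - 1
  have hK : ¬ univ.erase r ⊆ K := fun h => by
    have := h (mem_erase.2 ⟨fun h' => by simp [r, Fin.ext_iff] at h'; omega,
      mem_univ (⟨n - 1, by omega⟩ : Fin n)⟩)
    simp [K] at this
    omega
  convert EdgeSet.sum_not_twoConnected_eq_zero (by simpa using hn) (mem_univ r) hK using 2
  ext E
  simp only [mem_filter, mem_univ, true_and, mem_powerset]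
  rw [EdgeSet.isTwoConn_iff fun _ _ => Iff.rfl]
  have hedges : IsGraphEdges n E ↔ E ⊆ univ.powersetCard 2 := by
    simp [IsGraphEdges, subset_iff, mem_powersetCard]
  have hnbrs :
      (∀ e ∈ E, r ∈ e → ∀ x ∈ e, x ≠ r → 1 ≤ x.val ∧ x.val ≤ k - 1) ↔
      EdgeSet.NeighborsSubset E r K := by
    simp only [EdgeSet.NeighborsSubset, subset_iff, mem_insert, K, mem_filter, mem_univ, true_and]
    refine forall₂_congr fun e _ => imp_congr_right fun _ => forall₂_congr fun x _ => ?_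
    tauto
  rw [hedges, hnbrs]
  tauto
end

section
/- Let G be a finite connected simple graph with at least two vertices whose automorphism group acts transitively on the vertex set. Then G has no cutpoint: for every vertex v, the subgraph of G induced on the complement of {v} is connected. -/
open SimpleGraph

/-- A walk whose support lies in `s` gives reachability in the induced graph. -/
lemma walk_reachable_induce {V : Type} {G : SimpleGraph V} {s : Set V} :
    ∀ {u v : V} (p : G.Walk u v) (hp : ∀ x ∈ p.support, x ∈ s),
      (G.induce s).Reachable ⟨u, hp _ p.start_mem_support⟩ ⟨v, hp _ p.end_mem_support⟩ := by
  intro u v p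
  induction p with
  | nil => intro _; exact Reachable.refl _
  | @cons u w v h q ih =>
    intro hp
    have hq : ∀ x ∈ q.support, x ∈ s := fun x hx => hp x (by simp [hx])
    have hadj : (G.induce s).Adj ⟨u, hp _ (Walk.cons h q).start_mem_support⟩
        ⟨w, hq _ q.start_mem_support⟩ := by
      simpa using h
    exact hadj.reachable.trans (ih hq)

/-- An automorphism sending `w` to `v` gives an isomorphism of vertex-deleted graphs. -/
noncomputable def isoDelete {V : Type} {G : SimpleGraph V} (f : G ≃g G) {w v : V}
    (hf : f w = v) : (G.induce ({w}ᶜ : Set V)) ≃g (G.induce ({v}ᶜ : Set V)) where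
  toEquiv := f.toEquiv.subtypeEquiv (fun a => by
    simp only [Set.mem_compl_iff, Set.mem_singleton_iff, not_iff_not]
    constructor
    · rintro rfl; exact hf
    · intro h; exact f.toEquiv.injective (by simp [h, hf]))
  map_rel_iff' := by
    intro a b
    simp only [Equiv.subtypeEquiv_apply, comap_adj, Function.Embedding.coe_subtype]
    exact f.map_adj_iff

/-- A finite connected vertex-transitive graph with at least two vertices has no
cutpoint: deleting any vertex leaves a connected graph. -/
theorem no_cutpoint_of_vertex_transitive {V : Type} [Fintype V]
    (G : SimpleGraph V) (hcard : 2 ≤ Fintype.card V) (hconn : G.Connected)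
    (htrans : ∀ u v : V, ∃ f : G ≃g G, f u = v) :
    ∀ v : V, (G.induce ({v}ᶜ : Set V)).Connected := by
  haveI hne : Nonempty V := Fintype.card_pos_iff.mp (by omega)
  obtain ⟨r⟩ := hne
  haveI : Nonempty V := ⟨r⟩
  -- pick a vertex at maximal distance from r
  obtain ⟨w, hw⟩ := Finite.exists_max (fun u => G.dist r u)
  -- w ≠ r
  have hrw : r ≠ w := by
    obtain ⟨u, hu⟩ := Fintype.exists_ne_of_one_lt_card (by omega) r
    intro h
    have h0 : G.dist r u ≤ G.dist r w := hw u
    rw [← h, dist_self] at h0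
    exact hu (((hconn.dist_eq_zero_iff (u := r) (v := u)).mp (by omega)).symm)
  -- deleting w leaves a connected graph
  have key : (G.induce ({w}ᶜ : Set V)).Connected := by
    have reach_r : ∀ u : ({w}ᶜ : Set V),
        (G.induce ({w}ᶜ : Set V)).Reachable u ⟨r, by simpa using hrw⟩ := by
      rintro ⟨u, hu'⟩
      have hu : u ≠ w := by simpa using hu'
      classical
      obtain ⟨p, hp⟩ := hconn.exists_walk_length_eq_dist u r
      have hws : w ∉ p.support := by
        intro hws
        set q1 := p.takeUntil w hws with hq1
        set q2 := p.dropUntil w hws with hq2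
        have hsum : q1.length + q2.length = p.length := by
          rw [← Walk.length_append, Walk.take_spec]
        have h1 : 1 ≤ q1.length := by
          rcases Nat.eq_zero_or_pos q1.length with h | h
          · exact absurd (Walk.eq_of_length_eq_zero h) hu
          · exact h
        have h2 : G.dist w r ≤ q2.length := dist_le q2
        have h3' : G.dist r u ≤ G.dist r w := hw u
        have hc1 : G.dist u r = G.dist r u := SimpleGraph.dist_comm
        have hc2 : G.dist w r = G.dist r w := SimpleGraph.dist_comm
        omega
      have hsupp : ∀ x ∈ p.support, x ∈ ({w}ᶜ : Set V) := by
        intro x hx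
        simp only [Set.mem_compl_iff, Set.mem_singleton_iff]
        rintro rfl; exact hws hx
      exact walk_reachable_induce p hsupp
    rw [connected_iff]
    constructor
    · rintro ⟨a, ha⟩ ⟨b, hb⟩
      exact (reach_r ⟨a, ha⟩).trans (reach_r ⟨b, hb⟩).symm
    · exact ⟨⟨r, by simpa using hrw⟩⟩
  intro v
  obtain ⟨f, hf⟩ := htrans w v
  exact (isoDelete f hf).connected_iff.mp key
end

section
/- Let n ≥ 2, let g be a fixed-point-free permutation of [n] = {1,…,n}, and let G be a connected simple graph on [n] such that g is an automorphism of G. Let x be a cutpoint of G (a vertex such that the subgraph induced on [n]∖{x} is disconnected), and let O_x be the orbit of x under the cyclic group generated by g. Then there exists a connected component C of the subgraph of G induced on [n]∖{x} such that O_x ∖ {x} ⊆ C and C has nonempty intersection with every orbit of the cyclic group generated by g on [n]. -/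
open SimpleGraph

section aux
variable {n : ℕ}

/-- reachable by a walk avoiding `x` -/
def Rch (G : SimpleGraph (Fin n)) (x u v : Fin n) : Prop :=
  ∃ w : G.Walk u v, ∀ c ∈ w.support, c ≠ x

namespace Rch

variable {G : SimpleGraph (Fin n)} {x u v w : Fin n}

lemma ne_left (h : Rch G x u v) : u ≠ x := by
  obtain ⟨p, hp⟩ := h; exact hp u p.start_mem_support

lemma ne_right (h : Rch G x u v) : v ≠ x := by
  obtain ⟨p, hp⟩ := h; exact hp v p.end_mem_support

lemma rfl' (hu : u ≠ x) : Rch G x u u :=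
  ⟨Walk.nil, by simp [hu]⟩

lemma symm (h : Rch G x u v) : Rch G x v u := by
  obtain ⟨p, hp⟩ := h
  exact ⟨p.reverse, by simpa [Walk.support_reverse] using hp⟩

lemma trans (h1 : Rch G x u v) (h2 : Rch G x v w) : Rch G x u w := by
  obtain ⟨p, hp⟩ := h1; obtain ⟨q, hq⟩ := h2
  refine ⟨p.append q, ?_⟩
  intro c hc
  rw [Walk.support_append, List.mem_append] at hc
  rcases hc with hc | hc
  · exact hp c hc
  · exact hq c (List.mem_of_mem_tail hc)

lemma of_adj (h : G.Adj u v) (hu : u ≠ x) (hv : v ≠ x) : Rch G x u v :=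
  ⟨Walk.cons h Walk.nil, by simp [hu, hv]⟩

end Rch

lemma mem_compl_singleton {a x : Fin n} : a ∈ ({x}ᶜ : Set (Fin n)) ↔ a ≠ x := by
  simp

lemma lemA {G : SimpleGraph (Fin n)} {x : Fin n} (hconn : G.Connected)
    (h : Equiv.Perm (Fin n)) (hh : ∀ u v, G.Adj (h u) (h v) ↔ G.Adj u v)
    (hhx : h x ≠ x) {z : Fin n} (hz : z ≠ x) (hnz : ¬ Rch G x z (h⁻¹ x)) :
    Rch G x (h z) (h x) := by
  have key : ∀ (a c : Fin n) (w : G.Walk a c), c = x → a ≠ x → ¬ Rch G x a (h⁻¹ x) →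
      Rch G x (h a) (h x) := by
    intro a c w
    induction w with
    | nil => exact fun hc h1 _ => absurd hc h1
    | @cons a b c hadj w' ih =>
      intro hcx ha hna
      have haneq : a ≠ h⁻¹ x := by
        intro he
        exact hna (by rw [he]; exact Rch.rfl' (by rw [← he]; exact ha))
      have hax : h a ≠ x := by
        intro hax; apply haneq; rw [← hax]; simp
      by_cases hb : b = x
      · exact Rch.of_adj ((hh a x).mpr (hb ▸ hadj)) hax hhx
      · have hrab : Rch G x a b := Rch.of_adj hadj ha hb
        have hnb : ¬ Rch G x b (h⁻¹ x) := fun hrb => hna (hrab.trans hrb)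
        have hbneq : b ≠ h⁻¹ x := by
          intro he
          exact hnb (by rw [he]; exact Rch.rfl' (by rw [← he]; exact hb))
        have hbx : h b ≠ x := by
          intro hbx; apply hbneq; rw [← hbx]; simp
        exact (Rch.of_adj ((hh a b).mpr hadj) hax hbx).trans (ih hcx hb hnb)
  obtain ⟨w⟩ := hconn.preconnected z x
  exact key z x w rfl hz hnz

lemma lemB {G : SimpleGraph (Fin n)} {x : Fin n} (hconn : G.Connected)
    (h : Equiv.Perm (Fin n)) (hh : ∀ u v, G.Adj (h u) (h v) ↔ G.Adj u v)
    (hhx : h x ≠ x) : Rch G x (h x) (h⁻¹ x) := by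
  by_contra hnr
  set C : Set (Fin n) := {z | Rch G x z (h x)} with hC
  set E : Set (Fin n) := {z | Rch G x z (h⁻¹ x)} with hE
  have hsub : (h '' Eᶜ) ⊆ C := by
    rintro _ ⟨z, hzE, rfl⟩
    by_cases hzx : z = x
    · subst hzx; exact Rch.rfl' hhx
    · exact lemA hconn h hh hhx hzx hzE
  have hsub2 : insert x C ⊆ Eᶜ := by
    rintro z (rfl | hzC)
    · exact fun hzE => (Rch.ne_left hzE) rfl
    · exact fun hzE => hnr (hzC.symm.trans hzE)
  have h1 : Eᶜ.ncard ≤ C.ncard := by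
    rw [← Set.ncard_image_of_injective Eᶜ h.injective]
    exact Set.ncard_le_ncard hsub C.toFinite
  have hxC : x ∉ C := fun hx => (Rch.ne_left hx) rfl
  have h2 : C.ncard + 1 ≤ Eᶜ.ncard := by
    have := Set.ncard_le_ncard hsub2 Eᶜ.toFinite
    rwa [Set.ncard_insert_of_notMem hxC C.toFinite] at this
  omega

lemma lemBig {G : SimpleGraph (Fin n)} {x : Fin n} (hconn : G.Connected)
    (h : Equiv.Perm (Fin n)) (hh : ∀ u v, G.Adj (h u) (h v) ↔ G.Adj u v)
    (hhx : h x ≠ x) :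
    ({z | Rch G x z (h x)}ᶜ).ncard ≤ {z | Rch G x z (h x)}.ncard := by
  have hB := lemB hconn h hh hhx
  set C : Set (Fin n) := {z | Rch G x z (h x)} with hCdef
  have hsub : (h '' Cᶜ) ⊆ C := by
    rintro _ ⟨z, hzC, rfl⟩
    by_cases hzx : z = x
    · subst hzx; exact Rch.rfl' hhx
    · refine lemA hconn h hh hhx hzx (fun hrz => hzC ?_)
      exact hrz.trans hB.symm
  rw [← Set.ncard_image_of_injective Cᶜ h.injective]
  exact Set.ncard_le_ncard hsub C.toFinite

lemma lemC {G : SimpleGraph (Fin n)} {x : Fin n} {a b : Fin n}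
    (ha : a ≠ x) (hb : b ≠ x)
    (hbiga : ({z | Rch G x z a}ᶜ).ncard ≤ {z | Rch G x z a}.ncard)
    (hbigb : ({z | Rch G x z b}ᶜ).ncard ≤ {z | Rch G x z b}.ncard) :
    Rch G x a b := by
  by_contra hnr
  set A : Set (Fin n) := {z | Rch G x z a} with hA
  set B : Set (Fin n) := {z | Rch G x z b} with hB
  have hab : ∀ z, z ∈ A → z ∉ B := fun z hza hzb => hnr (hza.symm.trans hzb)
  have hsub1 : insert x B ⊆ Aᶜ := by
    rintro z (rfl | hzB)
    · exact fun hzA => (Rch.ne_left hzA) rfl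
    · exact fun hzA => hab z hzA hzB
  have hsub2 : insert x A ⊆ Bᶜ := by
    rintro z (rfl | hzA)
    · exact fun hzB => (Rch.ne_left hzB) rfl
    · exact fun hzB => hab z hzA hzB
  have hxA : x ∉ A := fun hx => (Rch.ne_left hx) rfl
  have hxB : x ∉ B := fun hx => (Rch.ne_left hx) rfl
  have h1 : B.ncard + 1 ≤ A.ncard := by
    have := Set.ncard_le_ncard hsub1 Aᶜ.toFinite
    rw [Set.ncard_insert_of_notMem hxB B.toFinite] at this
    omega
  have h2 : A.ncard + 1 ≤ B.ncard := by
    have := Set.ncard_le_ncard hsub2 Bᶜ.toFinite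
    rw [Set.ncard_insert_of_notMem hxA A.toFinite] at this
    omega
  omega

lemma aut_inv {G : SimpleGraph (Fin n)} (h : Equiv.Perm (Fin n))
    (hh : ∀ u v, G.Adj (h u) (h v) ↔ G.Adj u v) :
    ∀ u v, G.Adj (h⁻¹ u) (h⁻¹ v) ↔ G.Adj u v := by
  intro u v
  rw [← hh (h⁻¹ u) (h⁻¹ v)]
  simp

lemma aut_zpow {G : SimpleGraph (Fin n)} (g : Equiv.Perm (Fin n))
    (hg : ∀ u v, G.Adj (g u) (g v) ↔ G.Adj u v) :
    ∀ (m : ℤ) (u v), G.Adj ((g ^ m) u) ((g ^ m) v) ↔ G.Adj u v := by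
  have hnat : ∀ (k : ℕ) (u v), G.Adj ((g ^ k) u) ((g ^ k) v) ↔ G.Adj u v := by
    intro k
    induction k with
    | zero => simp
    | succ k ih =>
      intro u v
      rw [pow_succ]
      simpa using (ih (g u) (g v)).trans (hg u v)
  intro m u v
  rcases m with k | k
  · simpa [zpow_natCast] using hnat k u v
  · rw [zpow_negSucc]
    exact aut_inv (g ^ (k + 1)) (hnat (k + 1)) u v

lemma rch_to_reach {G : SimpleGraph (Fin n)} {x u v : Fin n}
    (h : Rch G x u v) (hu : u ∈ ({x}ᶜ : Set (Fin n))) (hv : v ∈ ({x}ᶜ : Set (Fin n))) :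
    (G.induce ({x}ᶜ : Set (Fin n))).Reachable ⟨u, hu⟩ ⟨v, hv⟩ := by
  have key : ∀ (p q : Fin n) (w : G.Walk p q), (∀ c ∈ w.support, c ≠ x) →
      ∀ (hp : p ∈ ({x}ᶜ : Set (Fin n))) (hq : q ∈ ({x}ᶜ : Set (Fin n))),
      (G.induce ({x}ᶜ : Set (Fin n))).Reachable ⟨p, hp⟩ ⟨q, hq⟩ := by
    intro p q w
    induction w with
    | nil => exact fun _ _ _ => Reachable.refl _
    | @cons a b c hadj w' ih =>
      intro hw ha hc
      have hb : b ∈ ({x}ᶜ : Set (Fin n)) :=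
        mem_compl_singleton.mpr (hw b (List.mem_cons_of_mem _ w'.start_mem_support))
      have hAdj : (G.induce ({x}ᶜ : Set (Fin n))).Adj ⟨a, ha⟩ ⟨b, hb⟩ := by
        simpa [SimpleGraph.comap_adj] using hadj
      exact hAdj.reachable.trans
        (ih (fun d hd => hw d (List.mem_cons_of_mem _ hd)) hb hc)
  obtain ⟨w, hw⟩ := h
  exact key u v w hw hu hv

lemma reach_to_rch {G : SimpleGraph (Fin n)} {x : Fin n}
    {a b : ({x}ᶜ : Set (Fin n))}
    (h : (G.induce ({x}ᶜ : Set (Fin n))).Reachable a b) :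
    Rch G x a.1 b.1 := by
  have key : ∀ (p q : ({x}ᶜ : Set (Fin n)))
      (w : (G.induce ({x}ᶜ : Set (Fin n))).Walk p q), Rch G x p.1 q.1 := by
    intro p q w
    induction w with
    | @nil u => exact Rch.rfl' (mem_compl_singleton.mp u.2)
    | @cons a b c hadj w' ih =>
      have hab : G.Adj a.1 b.1 := by simpa [SimpleGraph.comap_adj] using hadj
      exact (Rch.of_adj hab (mem_compl_singleton.mp a.2)
        (mem_compl_singleton.mp b.2)).trans ih
  obtain ⟨w⟩ := h
  exact key a b w

end aux

/-- Let `g` be a fixed-point-free automorphism of a connected graph `G` on `[n]`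
(represented by `Fin n`), and let `x` be a cutpoint of `G`. Then some connected
component `C` of `G - x` contains all of the `⟨g⟩`-orbit of `x` except `x` itself,
and `C` meets every `⟨g⟩`-orbit on the vertex set. -/
theorem cutpoint_component_meets_every_orbit (n : ℕ) (hn : 2 ≤ n)
    (g : Equiv.Perm (Fin n)) (hfpf : ∀ x : Fin n, g x ≠ x)
    (G : SimpleGraph (Fin n)) (hconn : G.Connected)
    (haut : ∀ u v : Fin n, G.Adj (g u) (g v) ↔ G.Adj u v)
    (x : Fin n) (hcut : ¬ (G.induce ({x}ᶜ : Set (Fin n))).Connected) :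
    ∃ C : (G.induce ({x}ᶜ : Set (Fin n))).ConnectedComponent,
      (∀ y : ({x}ᶜ : Set (Fin n)),
        (y : Fin n) ∈ Set.range (fun m : ℤ => (g ^ m) x) →
          (G.induce ({x}ᶜ : Set (Fin n))).connectedComponentMk y = C) ∧
      ∀ z : Fin n, ∃ y : ({x}ᶜ : Set (Fin n)),
        (G.induce ({x}ᶜ : Set (Fin n))).connectedComponentMk y = C ∧
          (y : Fin n) ∈ Set.range (fun m : ℤ => (g ^ m) z) := by
  classical
  have hgx : g x ≠ x := hfpf x
  have hgxS : g x ∈ ({x}ᶜ : Set (Fin n)) := mem_compl_singleton.mpr hgx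
  refine ⟨(G.induce ({x}ᶜ : Set (Fin n))).connectedComponentMk ⟨g x, hgxS⟩, ?_, ?_⟩
  · rintro y ⟨m, hm⟩
    have hm' : (g ^ m) x = (y : Fin n) := hm
    have hyx : (y : Fin n) ≠ x := mem_compl_singleton.mp y.2
    have hh := aut_zpow g haut m
    have hhx : (g ^ m) x ≠ x := by rw [hm']; exact hyx
    have hr : Rch G x ((g ^ m) x) (g x) :=
      lemC hhx hgx (lemBig hconn (g ^ m) hh hhx) (lemBig hconn g haut hgx)
    rw [hm'] at hr
    exact SimpleGraph.ConnectedComponent.sound (rch_to_reach hr y.2 hgxS)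
  · intro z
    by_cases hzx : z = x
    · exact ⟨⟨g x, hgxS⟩, rfl, 1, by simp [hzx]⟩
    · by_cases hrz : Rch G x z (g x)
      · exact ⟨⟨z, mem_compl_singleton.mpr hzx⟩,
          SimpleGraph.ConnectedComponent.sound (rch_to_reach hrz _ hgxS), 0, by simp⟩
      · have hB := lemB hconn g haut hgx
        have hnz : ¬ Rch G x z (g⁻¹ x) := fun hr => hrz (hr.trans hB.symm)
        have hr := lemA hconn g haut hgx hzx hnz
        exact ⟨⟨g z, mem_compl_singleton.mpr hr.ne_left⟩,
          SimpleGraph.ConnectedComponent.sound (rch_to_reach hr _ hgxS), 1, by simp⟩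
end

section
/- Let n ≥ 3 and let G be a simple graph on [n] = {1,…,n}. Then G is (n−3)-connected if and only if in the complement graph of G (the graph on [n] whose edges are exactly the 2-element subsets of [n] that are not edges of G) every vertex has degree at most 2 and there do not exist four distinct vertices a, b, c, d such that {a,b}, {b,c}, {c,d}, {d,a} are all edges of the complement graph (i.e., the complement contains no 4-cycle). -/
open Finset

/-- `G` is `i`-connected: more than `i` vertices, and removing fewer than `i`
vertices leaves a connected graph. -/
def IsIConn {V : Type} [Fintype V] (i : ℕ) (G : SimpleGraph V) : Prop :=
  i < Fintype.card V ∧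
    ∀ S : Finset V, S.card < i → (G.induce ((↑S : Set V)ᶜ)).Connected

private lemma induce_adj_aux {V : Type} (G : SimpleGraph V) (s : Set V)
    {x y : V} (hx : x ∈ s) (hy : y ∈ s) (h : G.Adj x y) :
    (G.induce s).Adj ⟨x, hx⟩ ⟨y, hy⟩ := h

private lemma adj_of_ne_not_compl {V : Type} (G : SimpleGraph V) {u w : V}
    (hne : u ≠ w) (h : ¬ Gᶜ.Adj u w) : G.Adj u w := by
  rw [SimpleGraph.compl_adj] at h
  push_neg at h
  exact h hne

/-- A graph on `[n]` (`n ≥ 3`) is `(n-3)`-connected iff its complement has maximum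
degree at most 2 and contains no 4-cycle. -/
theorem n_minus_three_connected_iff (n : ℕ) (hn : 3 ≤ n) (G : SimpleGraph (Fin n)) :
    IsIConn (n - 3) G ↔
      ((∀ v : Fin n, (Gᶜ.neighborSet v).ncard ≤ 2) ∧
        ¬ ∃ a b c d : Fin n, a ≠ b ∧ a ≠ c ∧ a ≠ d ∧ b ≠ c ∧ b ≠ d ∧ c ≠ d ∧
          Gᶜ.Adj a b ∧ Gᶜ.Adj b c ∧ Gᶜ.Adj c d ∧ Gᶜ.Adj d a) := by
  constructor
  · rintro ⟨-, h2⟩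
    constructor
    · -- max degree ≤ 2 in the complement
      intro v
      by_contra hdeg
      push_neg at hdeg
      obtain ⟨p, hp, q, hq, r, hr, hpq, hpr, hqr⟩ :=
        (Set.two_lt_ncard (Set.toFinite _)).mp hdeg
      rw [SimpleGraph.mem_neighborSet] at hp hq hr
      have hvp : v ≠ p := hp.ne
      have hvq : v ≠ q := hq.ne
      have hvr : v ≠ r := hr.ne
      have hcard : ({v, p, q, r} : Finset (Fin n)).card = 4 := by
        rw [card_insert_of_notMem (by simp [hvp, hvq, hvr]),
          card_insert_of_notMem (by simp [hpq, hpr]),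
          card_insert_of_notMem (by simp [hqr]), card_singleton]
      have h4n : 4 ≤ n := by
        have := Finset.card_le_univ ({v, p, q, r} : Finset (Fin n))
        rwa [hcard, Fintype.card_fin] at this
      have hScard : (({v, p, q, r} : Finset (Fin n))ᶜ).card < n - 3 := by
        rw [Finset.card_compl, hcard, Fintype.card_fin]
        omega
      have hconn := h2 _ hScard
      rw [show ((↑(({v, p, q, r} : Finset (Fin n))ᶜ) : Set (Fin n))ᶜ)
          = (↑({v, p, q, r} : Finset (Fin n)) : Set (Fin n)) by
        rw [Finset.coe_compl, compl_compl]] at hconn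
      set A : Set (Fin n) := (↑({v, p, q, r} : Finset (Fin n)) : Set (Fin n)) with hA
      have hvA : v ∈ A := by simp [hA]
      have hpA : p ∈ A := by simp [hA]
      have key : ∀ (x y : ↥A), (G.induce A).Walk x y → x.1 = v → y.1 = v := by
        intro x y w
        induction w with
        | nil => exact id
        | cons hadj p ih =>
          rename_i x' y' z'
          intro hx
          have hGadj : G.Adj x'.1 y'.1 := hadj
          rw [hx] at hGadj
          have hy' : y'.1 ∈ A := y'.2
          simp only [hA, Finset.coe_insert, Set.mem_insert_iff, Finset.coe_singleton,
            Set.mem_singleton_iff] at hy'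
          rcases hy' with h | h | h | h
          · exact absurd (h ▸ hGadj) (G.irrefl)
          · exact absurd (h ▸ hGadj) hp.2
          · exact absurd (h ▸ hGadj) hq.2
          · exact absurd (h ▸ hGadj) hr.2
      obtain ⟨w⟩ := hconn.preconnected ⟨v, hvA⟩ ⟨p, hpA⟩
      exact hvp (key _ _ w rfl).symm
    · -- no 4-cycle in the complement
      rintro ⟨a, b, c, d, hab, hac, had, hbc, hbd, hcd, e1, e2, e3, e4⟩
      have hcard : ({a, b, c, d} : Finset (Fin n)).card = 4 := by
        rw [card_insert_of_notMem (by simp [hab, hac, had]),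
          card_insert_of_notMem (by simp [hbc, hbd]),
          card_insert_of_notMem (by simp [hcd]), card_singleton]
      have h4n : 4 ≤ n := by
        have := Finset.card_le_univ ({a, b, c, d} : Finset (Fin n))
        rwa [hcard, Fintype.card_fin] at this
      have hScard : (({a, b, c, d} : Finset (Fin n))ᶜ).card < n - 3 := by
        rw [Finset.card_compl, hcard, Fintype.card_fin]
        omega
      have hconn := h2 _ hScard
      rw [show ((↑(({a, b, c, d} : Finset (Fin n))ᶜ) : Set (Fin n))ᶜ)
          = (↑({a, b, c, d} : Finset (Fin n)) : Set (Fin n)) by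
        rw [Finset.coe_compl, compl_compl]] at hconn
      set A : Set (Fin n) := (↑({a, b, c, d} : Finset (Fin n)) : Set (Fin n)) with hA
      have haA : a ∈ A := by simp [hA]
      have hbA : b ∈ A := by simp [hA]
      have key : ∀ (x y : ↥A), (G.induce A).Walk x y →
          (x.1 = a ∨ x.1 = c) → (y.1 = a ∨ y.1 = c) := by
        intro x y w
        induction w with
        | nil => exact id
        | cons hadj p ih =>
          rename_i x' y' z'
          intro hx
          apply ih
          have hGadj : G.Adj x'.1 y'.1 := hadj
          have hy' : y'.1 ∈ A := y'.2
          simp only [hA, Finset.coe_insert, Set.mem_insert_iff, Finset.coe_singleton,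
            Set.mem_singleton_iff] at hy'
          rcases hx with hx | hx <;> rw [hx] at hGadj
          · rcases hy' with h | h | h | h
            · exact absurd (h ▸ hGadj) (G.irrefl)
            · exact absurd (h ▸ hGadj) e1.2
            · exact Or.inr h
            · exact absurd ((h ▸ hGadj).symm) e4.2
          · rcases hy' with h | h | h | h
            · exact Or.inl h
            · exact absurd ((h ▸ hGadj).symm) e2.2
            · exact absurd (h ▸ hGadj) (G.irrefl)
            · exact absurd (h ▸ hGadj) e3.2
      obtain ⟨w⟩ := hconn.preconnected ⟨a, haA⟩ ⟨b, hbA⟩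
      rcases key _ _ w (Or.inl rfl) with h | h
      · exact hab h.symm
      · exact hbc h
  · rintro ⟨hdeg, hcyc⟩
    refine ⟨by rw [Fintype.card_fin]; omega, ?_⟩
    intro S hS
    set s : Set (Fin n) := (↑S : Set (Fin n))ᶜ with hsdef
    have hscard : 4 ≤ s.ncard := by
      rw [hsdef, ← Finset.coe_compl, Set.ncard_coe_finset, Finset.card_compl,
        Fintype.card_fin]
      omega
    have hne : Nonempty ↥s := by
      have : s.Nonempty := Set.nonempty_of_ncard_ne_zero (by omega)
      exact this.to_subtype
    have key : ∀ t : Set (Fin n), s ⊆ t → t.ncard ≤ 3 → False := by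
      intro t hsub ht
      have := Set.ncard_le_ncard hsub t.toFinite
      omega
    refine SimpleGraph.Connected.mk ?_
    rintro ⟨u, hu⟩ ⟨v, hv⟩
    by_cases huv : u = v
    · subst huv
      exact SimpleGraph.Reachable.refl _
    by_cases hadjuv : G.Adj u v
    · exact (induce_adj_aux G s hu hv hadjuv).reachable
    have hcuv : Gᶜ.Adj u v := (SimpleGraph.compl_adj G u v).mpr ⟨huv, hadjuv⟩
    by_cases hex : ∃ w, w ∈ s ∧ ¬(w = u ∨ w = v ∨ Gᶜ.Adj u w ∨ Gᶜ.Adj v w)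
    · obtain ⟨w, hws, hw⟩ := hex
      push_neg at hw
      obtain ⟨hwu, hwv, hnu, hnv⟩ := hw
      have h1 : G.Adj u w := adj_of_ne_not_compl G (Ne.symm hwu) hnu
      have h2 : G.Adj w v := (adj_of_ne_not_compl G (Ne.symm hwv) hnv).symm
      exact ((induce_adj_aux G s hu hws h1).reachable).trans
        (induce_adj_aux G s hws hv h2).reachable
    · push_neg at hex
      have hvNu : v ∈ Gᶜ.neighborSet u := hcuv
      have huNv : u ∈ Gᶜ.neighborSet v := hcuv.symm
      -- get w1 ∈ Nu \ {v}
      have hw1ex : ((Gᶜ.neighborSet u) \ {v}).Nonempty := by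
        rw [Set.nonempty_iff_ne_empty]
        intro hemp
        have hNu1 : ∀ x, Gᶜ.Adj u x → x = v := by
          intro x hx
          by_contra hne
          exact (Set.eq_empty_iff_forall_notMem.mp hemp x) ⟨hx, hne⟩
        apply key (insert v (Gᶜ.neighborSet v))
        · intro w hw
          rcases hex w hw with h | h | h | h
          · exact h ▸ Set.mem_insert_iff.mpr (Or.inr huNv)
          · exact h ▸ Set.mem_insert _ _
          · exact (hNu1 w h) ▸ Set.mem_insert _ _
          · exact Set.mem_insert_iff.mpr (Or.inr h)
        · have := Set.ncard_insert_le v (Gᶜ.neighborSet v)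
          have := hdeg v
          omega
      have hw2ex : ((Gᶜ.neighborSet v) \ {u}).Nonempty := by
        rw [Set.nonempty_iff_ne_empty]
        intro hemp
        have hNv1 : ∀ x, Gᶜ.Adj v x → x = u := by
          intro x hx
          by_contra hne
          exact (Set.eq_empty_iff_forall_notMem.mp hemp x) ⟨hx, hne⟩
        apply key (insert u (Gᶜ.neighborSet u))
        · intro w hw
          rcases hex w hw with h | h | h | h
          · exact h ▸ Set.mem_insert _ _
          · exact h ▸ Set.mem_insert_iff.mpr (Or.inr hvNu)
          · exact Set.mem_insert_iff.mpr (Or.inr h)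
          · exact (hNv1 w h) ▸ Set.mem_insert _ _
        · have := Set.ncard_insert_le u (Gᶜ.neighborSet u)
          have := hdeg u
          omega
      obtain ⟨w1, hw1Nu, hw1v⟩ := hw1ex
      obtain ⟨w2, hw2Nv, hw2u⟩ := hw2ex
      rw [Set.mem_singleton_iff] at hw1v hw2u
      have hcw1 : Gᶜ.Adj u w1 := hw1Nu
      have hcw2 : Gᶜ.Adj v w2 := hw2Nv
      have hw1u : w1 ≠ u := fun h => Gᶜ.irrefl (h ▸ hcw1)
      have hw2v : w2 ≠ v := fun h => Gᶜ.irrefl (h ▸ hcw2)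
      have hNueq : Gᶜ.neighborSet u = {v, w1} := by
        refine (Set.eq_of_subset_of_ncard_le ?_ ?_ (Set.toFinite _)).symm
        · rw [Set.insert_subset_iff, Set.singleton_subset_iff]
          exact ⟨hvNu, hw1Nu⟩
        · rw [Set.ncard_pair (Ne.symm hw1v)]
          exact hdeg u
      have hNveq : Gᶜ.neighborSet v = {u, w2} := by
        refine (Set.eq_of_subset_of_ncard_le ?_ ?_ (Set.toFinite _)).symm
        · rw [Set.insert_subset_iff, Set.singleton_subset_iff]
          exact ⟨huNv, hw2Nv⟩
        · rw [Set.ncard_pair (Ne.symm hw2u)]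
          exact hdeg v
      have hw12 : w1 ≠ w2 := by
        intro h
        subst h
        apply key {u, v, w1}
        · intro w hw
          rcases hex w hw with h | h | h | h
          · simp [h]
          · simp [h]
          · have hm : w ∈ ({v, w1} : Set (Fin n)) := hNueq ▸ h
            simp only [Set.mem_insert_iff, Set.mem_singleton_iff] at hm
            rcases hm with h' | h' <;> simp [h']
          · have hm : w ∈ ({u, w1} : Set (Fin n)) := hNveq ▸ h
            simp only [Set.mem_insert_iff, Set.mem_singleton_iff] at hm
            rcases hm with h' | h' <;> simp [h']
        · have h1 := Set.ncard_insert_le u ({v, w1} : Set (Fin n))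
          have h2 := Set.ncard_insert_le v ({w1} : Set (Fin n))
          have h3 := Set.ncard_singleton w1
          omega
      have hsub : s ⊆ {u, v, w1, w2} := by
        intro w hw
        rcases hex w hw with h | h | h | h
        · simp [h]
        · simp [h]
        · have hm : w ∈ ({v, w1} : Set (Fin n)) := hNueq ▸ h
          simp only [Set.mem_insert_iff, Set.mem_singleton_iff] at hm
          rcases hm with h' | h' <;> simp [h']
        · have hm : w ∈ ({u, w2} : Set (Fin n)) := hNveq ▸ h
          simp only [Set.mem_insert_iff, Set.mem_singleton_iff] at hm
          rcases hm with h' | h' <;> simp [h']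
      have hseq : s = {u, v, w1, w2} := by
        refine Set.eq_of_subset_of_ncard_le hsub ?_ (Set.toFinite _)
        have h1 := Set.ncard_insert_le u ({v, w1, w2} : Set (Fin n))
        have h2 := Set.ncard_insert_le v ({w1, w2} : Set (Fin n))
        have h3 := Set.ncard_insert_le w1 ({w2} : Set (Fin n))
        have h4 := Set.ncard_singleton w2
        omega
      have hw1s : w1 ∈ s := by rw [hseq]; simp
      have hw2s : w2 ∈ s := by rw [hseq]; simp
      have hnc12 : ¬ Gᶜ.Adj w1 w2 := by
        intro h
        exact hcyc ⟨v, u, w1, w2, Ne.symm huv, Ne.symm hw1v, Ne.symm hw2v,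
          Ne.symm hw1u, Ne.symm hw2u, hw12,
          hcuv.symm, hcw1, h, hcw2.symm⟩
      have ha1 : G.Adj u w2 := by
        refine adj_of_ne_not_compl G (Ne.symm hw2u) ?_
        intro h
        have hm : w2 ∈ ({v, w1} : Set (Fin n)) := hNueq ▸ (h : w2 ∈ Gᶜ.neighborSet u)
        simp only [Set.mem_insert_iff, Set.mem_singleton_iff] at hm
        rcases hm with h' | h'
        · exact hw2v h'
        · exact hw12 h'.symm
      have ha2 : G.Adj w2 w1 := adj_of_ne_not_compl G (Ne.symm hw12) (fun h => hnc12 h.symm)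
      have ha3 : G.Adj w1 v := by
        have : G.Adj v w1 := by
          refine adj_of_ne_not_compl G (Ne.symm hw1v) ?_
          intro h
          have hm : w1 ∈ ({u, w2} : Set (Fin n)) := hNveq ▸ (h : w1 ∈ Gᶜ.neighborSet v)
          simp only [Set.mem_insert_iff, Set.mem_singleton_iff] at hm
          rcases hm with h' | h'
          · exact hw1u h'
          · exact hw12 h'
        exact this.symm
      exact ((induce_adj_aux G s hu hw2s ha1).reachable).trans
        (((induce_adj_aux G s hw2s hw1s ha2).reachable).trans
          (induce_adj_aux G s hw1s hv ha3).reachable)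
end

section
/- Let k > 3 and k ≤ n ≤ 2k − 2. Then the sum of (−1)^{|E|} over all k-graphs E on [n] that are not 2-connected equals (−1)^{n−k} · binomial(n−1, k−1). (This is the Euler-characteristic consequence of the theorem that for k > 3 and n < 2k−1 the complex Δ_{n,k}^2 of not 2-connected k-graphs has the homotopy type of a wedge of binomial(n−1,k−1) spheres of dimension n−k−1.) -/
open Finset

/-- The graph underlying a hypergraph on `Fin n`: two distinct vertices are adjacent
iff they lie in a common hyperedge. -/
def hyperGraphOf (n : ℕ) (E : Finset (Finset (Fin n))) : SimpleGraph (Fin n) where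
  Adj u v := u ≠ v ∧ ∃ e ∈ E, u ∈ e ∧ v ∈ e
  symm := ⟨by
    rintro u v ⟨h1, e, he, hu, hv⟩
    exact ⟨h1.symm, e, he, hv, hu⟩⟩
  loopless := ⟨fun u h => h.1 rfl⟩

/-!
For `n ≤ 2k - 2` any two `k`-subsets of `[n]` share at least two vertices, so a `k`-graph is
2-connected exactly when it covers every vertex. Inclusion–exclusion over the set `T` of uncovered
vertices turns the sum into alternating sums over the powersets of the families of `k`-sets
avoiding `T`; such a sum vanishes unless the family is empty, i.e. unless `|T| > n - k`. What is
left is the tail `∑_{j > n-k} (-1)^(j+1) C(n, j) = (-1)^(n-k) C(n-1, n-k)` of an alternating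
binomial sum.
-/

lemma nontrivial_inter_of_card_eq {α : Type*} [Fintype α] [DecidableEq α] {k : ℕ}
    {e f : Finset α} (he : #e = k) (hf : #f = k) (hk : Fintype.card α + 2 ≤ 2 * k) :
    (e ∩ f).Nontrivial := by
  rw [← one_lt_card_iff_nontrivial]
  have := card_union_add_card_inter e f
  have := card_le_univ (e ∪ f)
  omega

section Hypergraph

variable {n : ℕ} {E : Finset (Finset (Fin n))}

lemma reachable_induce_hyperGraphOf_of_mem {s : Set (Fin n)} {e : Finset (Fin n)} (he : e ∈ E)
    {u v : s} (hu : (u : Fin n) ∈ e) (hv : (v : Fin n) ∈ e) :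
    ((hyperGraphOf n E).induce s).Reachable u v := by
  obtain rfl | huv := eq_or_ne u v
  · rfl
  · exact SimpleGraph.Adj.reachable ⟨fun h => huv (Subtype.ext h), e, he, hu, hv⟩

lemma connected_induce_hyperGraphOf {s : Set (Fin n)} (hs : s.Nonempty)
    (hcover : ∀ v ∈ s, ∃ e ∈ E, v ∈ e) (hmeet : ∀ e ∈ E, ∀ f ∈ E, ∃ w ∈ s, w ∈ e ∧ w ∈ f) :
    ((hyperGraphOf n E).induce s).Connected := by
  have : Nonempty s := hs.to_subtype
  refine .mk fun u v => ?_
  obtain ⟨e, he, hue⟩ := hcover u u.2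
  obtain ⟨f, hf, hvf⟩ := hcover v v.2
  obtain ⟨w, hws, hwe, hwf⟩ := hmeet e he f hf
  exact (reachable_induce_hyperGraphOf_of_mem he (v := ⟨w, hws⟩) hue hwe).trans
    (reachable_induce_hyperGraphOf_of_mem hf hwf hvf)

lemma isTwoConn_hyperGraphOf (hn : 2 ≤ n) (hcover : ∀ v, ∃ e ∈ E, v ∈ e)
    (hmeet : ∀ e ∈ E, ∀ f ∈ E, (e ∩ f).Nontrivial) : IsTwoConn (hyperGraphOf n E) := by
  have : Nontrivial (Fin n) := Fin.nontrivial_iff_two_le.2 hn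
  refine ⟨by simpa using hn, ?_, fun x => ?_⟩
  · rw [← (hyperGraphOf n E).induceUnivIso.connected_iff]
    refine connected_induce_hyperGraphOf Set.univ_nonempty (fun v _ => hcover v)
      fun e he f hf => ?_
    obtain ⟨w, hw⟩ := (hmeet e he f hf).nonempty
    exact ⟨w, Set.mem_univ w, mem_inter.1 hw⟩
  · refine connected_induce_hyperGraphOf (exists_ne x) (fun v _ => hcover v) fun e he f hf => ?_
    obtain ⟨w, hw⟩ := (hmeet e he f hf).erase_nonempty (a := x)
    rw [mem_erase, mem_inter] at hw
    exact ⟨w, hw.1, hw.2⟩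

lemma not_isTwoConn_hyperGraphOf_of_forall_notMem {v : Fin n} (hv : ∀ e ∈ E, v ∉ e) :
    ¬ IsTwoConn (hyperGraphOf n E) := by
  rintro ⟨hn, hconn, -⟩
  have : Nontrivial (Fin n) := Fin.nontrivial_iff_two_le.2 (by simpa using hn)
  obtain ⟨w, -, e, he, hve, -⟩ : v ∈ (hyperGraphOf n E).support := by
    simp [hconn.preconnected.support_eq_univ]
  exact hv e he hve

lemma not_isTwoConn_hyperGraphOf_iff {k : ℕ} (hn : 2 ≤ n) (hnk : n + 2 ≤ 2 * k)
    (hE : ∀ e ∈ E, #e = k) : ¬ IsTwoConn (hyperGraphOf n E) ↔ ∃ v, ∀ e ∈ E, v ∉ e := by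
  refine ⟨fun h => ?_, fun ⟨v, hv⟩ => not_isTwoConn_hyperGraphOf_of_forall_notMem hv⟩
  by_contra! hcover
  exact h (isTwoConn_hyperGraphOf hn hcover fun e he f hf =>
    nontrivial_inter_of_card_eq (hE e he) (hE f hf) (by simpa using hnk))

end Hypergraph

lemma sum_range_filter_lt_neg_one_pow_succ_mul_choose {n m : ℕ} (h : m < n) :
    ∑ j ∈ range (n + 1) with m < j, (-1 : ℤ) ^ (j + 1) * n.choose j =
      (-1) ^ m * (n - 1).choose m := by
  obtain ⟨n, rfl⟩ : ∃ n', n = n' + 1 := ⟨n - 1, by omega⟩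
  have htotal := Int.alternating_sum_range_choose_of_ne (n := n + 1) n.succ_ne_zero
  have hhead : ∑ j ∈ range (n + 2) with ¬ m < j, (-1 : ℤ) ^ j * (n + 1).choose j =
      (-1) ^ m * n.choose m := by
    rw [← Int.alternating_sum_range_choose_eq_choose]
    congr 1
    ext j
    simp only [mem_filter, mem_range]
    omega
  rw [← sum_filter_add_sum_filter_not _ (m < ·)] at htotal
  simp only [pow_succ, mul_neg_one, neg_mul, sum_neg_distrib, Nat.add_sub_cancel]
  linarith

lemma sum_neg_one_pow_card_uniform_missing_vertex {α : Type*} [Fintype α] [DecidableEq α] {k : ℕ}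
    (hk : 0 < k) (hkn : k ≤ Fintype.card α) :
    ∑ E : Finset (Finset α) with (∀ e ∈ E, #e = k) ∧ ∃ v, ∀ e ∈ E, v ∉ e, (-1 : ℤ) ^ #E =
      (-1) ^ (Fintype.card α - k) * (Fintype.card α - 1).choose (k - 1) := by
  set S : α → Finset (Finset (Finset α)) := fun v => (powersetCard k {v}ᶜ).powerset
  have hunion : ({E : Finset (Finset α) | (∀ e ∈ E, #e = k) ∧ ∃ v, ∀ e ∈ E, v ∉ e} : Finset _) =
      univ.biUnion S := by
    ext E
    simp only [S, mem_filter, mem_univ, true_and, mem_biUnion, mem_powerset, subset_iff,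
      mem_powersetCard, mem_compl, mem_singleton]
    constructor
    · rintro ⟨hcard, v, hv⟩
      exact ⟨v, fun e he => ⟨fun w hw hwv => hv e he (hwv ▸ hw), hcard e he⟩⟩
    · rintro ⟨v, hv⟩
      exact ⟨fun e he => (hv he).2, v, fun e he hve => (hv he).1 hve rfl⟩
  have hinter (t : Finset α) (ht : t.Nonempty) : t.inf' ht S = (powersetCard k tᶜ).powerset := by
    ext E
    simp only [S, mem_inf', mem_powerset, subset_iff, mem_powersetCard, mem_compl, mem_singleton]
    grind
  have hinner (t : Finset α) (ht : t.Nonempty) :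
      ∑ E ∈ t.inf' ht S, (-1 : ℤ) ^ #E = if Fintype.card α - #t < k then 1 else 0 := by
    simp only [hinter, sum_powerset_neg_one_pow_card, powersetCard_eq_empty, card_compl]
  rw [hunion, inclusion_exclusion_sum_biUnion]
  simp only [hinner, smul_eq_mul]
  rw [sum_coe_sort (f := fun t => (-1 : ℤ) ^ (#t + 1) * if Fintype.card α - #t < k then 1 else 0),
    sum_filter_of_ne, sum_powerset_apply_card
      (fun j => (-1 : ℤ) ^ (j + 1) * if Fintype.card α - j < k then 1 else 0), card_univ]
  · rw [Nat.choose_symm_of_eq_add (show Fintype.card α - 1 = k - 1 + (Fintype.card α - k) by omega),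
      ← sum_range_filter_lt_neg_one_pow_succ_mul_choose (by omega), sum_filter]
    refine sum_congr rfl fun j _ => ?_
    by_cases hj : Fintype.card α - k < j
    · rw [if_pos hj, if_pos (by omega), nsmul_eq_mul]
      ring
    · rw [if_neg hj, if_neg (by omega), mul_zero, smul_zero]
  · rintro t - hne
    refine nonempty_iff_ne_empty.2 fun ht => hne ?_
    rw [ht, card_empty, if_neg (by omega), mul_zero]

open scoped Classical in
/-- For `k > 3` and `k ≤ n ≤ 2k-2`, the sum of `(-1)^{|E|}` over all not 2-connected
`k`-graphs `E` on `[n]` equals `(-1)^{n-k} · C(n-1, k-1)`. -/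
theorem euler_char_hypergraph_small_n (n k : ℕ) (hk : 3 < k) (hkn : k ≤ n)
    (hn : n ≤ 2 * k - 2) :
    ∑ E ∈ Finset.univ.filter
        (fun E : Finset (Finset (Fin n)) =>
          (∀ e ∈ E, e.card = k) ∧ ¬ IsTwoConn (hyperGraphOf n E)),
      (-1 : ℤ) ^ E.card = (-1 : ℤ) ^ (n - k) * (n - 1).choose (k - 1) := by
  have h := sum_neg_one_pow_card_uniform_missing_vertex (α := Fin n) (k := k) (by omega)
    (by simpa using hkn)
  rw [Fintype.card_fin] at h
  convert h using 2
  ext E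
  simp only [mem_filter, mem_univ, true_and]
  exact and_congr_right fun hE => not_isTwoConn_hyperGraphOf_iff (by omega) (by omega) hE
end

section
/- Fix integers k ≥ 2 and n ≥ 2, and let G be a connected graph belonging to Σ_{n,k}, with blocks W_1, …, W_r of sizes w_i = |W_i| (since G is connected and lies in Σ_{n,k}, each W_i is a clique with w_i ≥ k vertices). Then μ_{Σ_{n,k}}(0̂, G) = Π_{i=1}^r μ_{Σ_{w_i,k}}(0̂, 1̂), where 0̂ denotes the empty graph (the least element) and 1̂ denotes the complete graph on w_i vertices (the greatest element of Σ_{w_i,k}, using that w_i ≥ k). -/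
/-!
Every edge of `G ∈ Σ_{n,k}` lies in exactly one block of `G`, so a subgraph `H ⊆ G` is the
disjoint union of its restrictions `H|_W` to the blocks `W`. The blocks of `H` with at least two
vertices are exactly the blocks of these restrictions, hence `H ∈ Σ_{n,k}` iff every `H|_W`,
relabelled to `[#W]`, lies in `Σ_{#W,k}`. So the interval `[0̂, G]` is the product of the
intervals `[0̂, 1̂]` of the `Σ_{#W,k}`, and `H ↦ ∏_W μ_{Σ_{#W,k}}(0̂, H|_W)` satisfies the
recurrence that determines `μ_{Σ_{n,k}}(0̂, ·)` on `[0̂, G]`; at `H = G` each `G|_W` is complete.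
-/

open Finset

def BlockCand {V : Type} (G : SimpleGraph V) (W : Finset V) : Prop :=
  W.card = 1 ∨ IsTwoConn (G.induce (W : Set V))

def IsBlock {V : Type} (G : SimpleGraph V) (W : Finset V) : Prop :=
  BlockCand G W ∧ ∀ W' : Finset V, W ⊂ W' → ¬ BlockCand G W'

def InSigma (n k : ℕ) (E : Finset (Finset (Fin n))) : Prop :=
  IsGraphEdges n E ∧ ∀ W : Finset (Fin n), IsBlock (graphOf n E) W →
    W.card = 1 ∨ (k ≤ W.card ∧ (graphOf n E).IsClique (W : Set (Fin n)))

/-- `G` covers `H` in the poset `Σ_{n,k}` ordered by inclusion of edge sets. -/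
def SigmaCovers (n k : ℕ) (H G : Finset (Finset (Fin n))) : Prop :=
  InSigma n k H ∧ InSigma n k G ∧ H ⊂ G ∧
    ∀ Z : Finset (Finset (Fin n)), InSigma n k Z → H ⊂ Z → Z ⊂ G → False

/-- the edge set of the complete graph on `Fin n` -/
def completeEdges (n : ℕ) : Finset (Finset (Fin n)) :=
  Finset.powersetCard 2 Finset.univ

/-- the number of connected components of the graph with edge set `E` -/
noncomputable def numComponents (n : ℕ) (E : Finset (Finset (Fin n))) : ℕ :=
  Nat.card (graphOf n E).ConnectedComponent

/-- the number of blocks with at least two vertices of the graph with edge set `E` -/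
noncomputable def numBigBlocks (n : ℕ) (E : Finset (Finset (Fin n))) : ℕ :=
  Set.ncard {W : Finset (Fin n) | IsBlock (graphOf n E) W ∧ 2 ≤ W.card}

namespace SimpleGraph

variable {V V' : Type*} {G : SimpleGraph V} {G' : SimpleGraph V'}

noncomputable def Embedding.induceIsoOfImageEq (φ : G ↪g G') {s : Set V} {t : Set V'}
    (h : φ '' s = t) : G.induce s ≃g G'.induce t where
  toEquiv := (Equiv.Set.image φ s φ.injective).trans (Equiv.setCongr h)
  map_rel_iff' := φ.map_adj_iff

end SimpleGraph

section TwoConnected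

variable {V V' : Type}

lemma IsTwoConn.of_iso [Fintype V] [Fintype V'] {A : SimpleGraph V} {B : SimpleGraph V'}
    (e : A ≃g B) (h : IsTwoConn A) : IsTwoConn B := by
  obtain ⟨hcard, hconn, hdel⟩ := h
  refine ⟨Fintype.card_congr e.toEquiv ▸ hcard, e.connected_iff.1 hconn, fun w => ?_⟩
  have himage : e.toEmbedding '' {e.symm w}ᶜ = {w}ᶜ := by
    simp [Set.image_compl_eq e.bijective]
  exact (e.toEmbedding.induceIsoOfImageEq himage).connected_iff.1 (hdel (e.symm w))

lemma IsTwoConn.mono [Fintype V] {A B : SimpleGraph V} (hAB : A ≤ B) (h : IsTwoConn A) :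
    IsTwoConn B :=
  ⟨h.1, h.2.1.mono hAB, fun v => (h.2.2 v).mono (SimpleGraph.comap_monotone _ hAB)⟩

lemma isTwoConn_induce_iff {G : SimpleGraph V} {W : Finset V} :
    IsTwoConn (G.induce (W : Set V)) ↔ 2 ≤ #W ∧ (G.induce (W : Set V)).Connected ∧
      ∀ x ∈ W, (G.induce ((W : Set V) \ {x})).Connected := by
  have hdel : ∀ x (hx : x ∈ W), ((G.induce (W : Set V)).induce {⟨x, hx⟩}ᶜ).Connected ↔
      (G.induce ((W : Set V) \ {x})).Connected := fun x hx =>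
    ((SimpleGraph.Embedding.induce _).induceIsoOfImageEq (by ext; simp [and_comm])).connected_iff
  simp only [IsTwoConn, SetLike.coe_sort_coe, Fintype.card_coe, Subtype.forall, hdel]

end TwoConnected

section Blocks

variable {V : Type} {G H : SimpleGraph V} {W W₁ W₂ B : Finset V}

lemma BlockCand.mono (hGH : G ≤ H) (h : BlockCand G W) : BlockCand H W :=
  h.imp_right (IsTwoConn.mono (SimpleGraph.comap_monotone _ hGH))

lemma blockCand_congr (h : ∀ x ∈ W, ∀ y ∈ W, G.Adj x y ↔ H.Adj x y) :
    BlockCand G W ↔ BlockCand H W := by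
  have : G.induce (W : Set V) = H.induce (W : Set V) := by
    ext x y
    exact h x x.2 y y.2
  rw [BlockCand, BlockCand, this]

lemma BlockCand.two_le_card (h : BlockCand G W) (h1 : #W ≠ 1) : 2 ≤ #W :=
  (isTwoConn_induce_iff.1 (h.resolve_left h1)).1

lemma BlockCand.card_pos (h : BlockCand G W) : 0 < #W := by
  by_cases h1 : #W = 1
  · omega
  · have := h.two_le_card h1
    omega

lemma BlockCand.exists_adj (h : BlockCand G W) (h2 : 2 ≤ #W) {x : V} (hx : x ∈ W) :
    ∃ y ∈ W, G.Adj x y := by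
  obtain ⟨-, hconn, -⟩ := isTwoConn_induce_iff.1 (h.resolve_left (by omega))
  obtain ⟨y, hyW, hyx⟩ := exists_mem_ne (by omega : 1 < #W) x
  obtain ⟨p⟩ := hconn.preconnected ⟨x, hx⟩ ⟨y, hyW⟩
  cases p with
  | nil => exact absurd rfl hyx
  | cons hadj _ => exact ⟨_, Subtype.prop _, hadj⟩

lemma blockCand_pair [DecidableEq V] {u v : V} (h : G.Adj u v) : BlockCand G {u, v} := by
  refine Or.inr (isTwoConn_induce_iff.2 ⟨(card_pair h.ne).ge, ?_, fun x hx => ?_⟩)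
  · rw [coe_pair]
    exact SimpleGraph.induce_pair_connected_of_adj h
  · rw [coe_pair]
    rcases mem_insert.1 hx with rfl | hx
    · rw [Set.insert_sdiff_self_of_notMem (by simpa using h.ne)]
      simp
    · rw [mem_singleton.1 hx, Set.pair_comm,
        Set.insert_sdiff_self_of_notMem (by simpa using h.ne')]
      simp

lemma BlockCand.union [DecidableEq V] (h₁ : BlockCand G W₁) (h₂ : BlockCand G W₂)
    (h : 2 ≤ #(W₁ ∩ W₂)) : BlockCand G (W₁ ∪ W₂) := by
  have hW₁ : 2 ≤ #W₁ := h.trans (card_le_card inter_subset_left)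
  have hW₂ : 2 ≤ #W₂ := h.trans (card_le_card inter_subset_right)
  have conn : ∀ {W}, BlockCand G W → 2 ≤ #W → (G.induce (W : Set V)).Connected :=
    fun hW h2 => (isTwoConn_induce_iff.1 (hW.resolve_left (by omega))).2.1
  have conn_del : ∀ {W} (x : V), BlockCand G W → 2 ≤ #W →
      (G.induce ((W : Set V) \ {x})).Connected := by
    intro W x hW h2
    by_cases hx : x ∈ W
    · exact (isTwoConn_induce_iff.1 (hW.resolve_left (by omega))).2.2 x hx
    · rw [Set.sdiff_singleton_eq_self (by simpa using hx)]
      exact conn hW h2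
  refine Or.inr (isTwoConn_induce_iff.2
    ⟨h.trans (card_le_card inter_subset_union), ?_, fun x _ => ?_⟩)
  · rw [coe_union]
    refine SimpleGraph.induce_union_connected (conn h₁ hW₁).preconnected
      (conn h₂ hW₂).preconnected ?_
    obtain ⟨y, hy⟩ := Finset.card_pos.1 (by omega : 0 < #(W₁ ∩ W₂))
    exact ⟨y, by simpa using hy⟩
  · rw [coe_union, Set.union_sdiff_distrib]
    refine SimpleGraph.induce_union_connected (conn_del x h₁ hW₁).preconnected
      (conn_del x h₂ hW₂).preconnected ?_
    obtain ⟨y, hy, hyx⟩ := exists_mem_ne (by omega : 1 < #(W₁ ∩ W₂)) x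
    rw [mem_inter] at hy
    exact ⟨y, ⟨by simpa using hy.1, hyx⟩, by simpa using hy.2, hyx⟩

lemma BlockCand.exists_isBlock_superset [Fintype V] (h : BlockCand G W) :
    ∃ W', W ⊆ W' ∧ IsBlock G W' := by
  obtain ⟨M, hWM, hM⟩ := Finite.exists_le_maximal h
  exact ⟨M, hWM, hM.1, fun W' hMW' hW' => hMW'.not_subset (hM.2 hW' hMW'.subset)⟩

lemma IsBlock.card_inter_le_one [DecidableEq V] (h₁ : IsBlock G W₁) (h₂ : IsBlock G W₂)
    (hne : W₁ ≠ W₂) : #(W₁ ∩ W₂) ≤ 1 := by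
  by_contra! hinter
  have hunion := h₁.1.union h₂.1 hinter
  by_cases h₂₁ : W₂ ⊆ W₁
  · exact h₂.2 W₁ (ssubset_of_subset_of_ne h₂₁ hne.symm) h₁.1
  · exact h₁.2 _ (left_lt_sup.2 h₂₁) hunion

lemma IsBlock.eq_of_subset [DecidableEq V] (h₁ : IsBlock G W₁) (h₂ : IsBlock G W₂)
    (hB : 2 ≤ #B) (hB₁ : B ⊆ W₁) (hB₂ : B ⊆ W₂) : W₁ = W₂ := by
  by_contra hne
  have := card_le_card (subset_inter hB₁ hB₂)
  have := h₁.card_inter_le_one h₂ hne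
  omega

lemma exists_isBlock_of_adj [Fintype V] [DecidableEq V] {u v : V} (h : G.Adj u v) :
    ∃ W, IsBlock G W ∧ {u, v} ⊆ W := by
  obtain ⟨W, huvW, hW⟩ := (blockCand_pair h).exists_isBlock_superset
  exact ⟨W, hW, huvW⟩

end Blocks

section Map

variable {V V' : Type} {G : SimpleGraph V} (f : V ↪ V')

lemma blockCand_map_iff {B : Finset V} : BlockCand (G.map f) (B.map f) ↔ BlockCand G B := by
  have e := (SimpleGraph.Embedding.map f G).induceIsoOfImageEq (coe_map f B).symm
  rw [BlockCand, BlockCand, card_map]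
  exact or_congr_right ⟨IsTwoConn.of_iso e.symm, IsTwoConn.of_iso e⟩

lemma BlockCand.exists_eq_map [Fintype V] {W : Finset V'} (h : BlockCand (G.map f) W)
    (h2 : 2 ≤ #W) : ∃ B : Finset V, W = B.map f := by
  have hW : W ⊆ univ.map f := fun x hx => by
    obtain ⟨y, -, -, a, b, -, rfl, -⟩ := h.exists_adj h2 hx
    exact mem_map_of_mem f (mem_univ a)
  obtain ⟨B, -, rfl⟩ := subset_map_iff.1 hW
  exact ⟨B, rfl⟩

lemma isBlock_map_iff [Fintype V] {B : Finset V} :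
    IsBlock (G.map f) (B.map f) ↔ IsBlock G B := by
  constructor
  · rintro ⟨hB, hmax⟩
    exact ⟨(blockCand_map_iff f).1 hB,
      fun C hBC hC => hmax _ (map_ssubset_map.2 hBC) ((blockCand_map_iff f).2 hC)⟩
  · rintro ⟨hB, hmax⟩
    refine ⟨(blockCand_map_iff f).2 hB, fun W hBW hW => ?_⟩
    have hcard : #B < #W := card_map f (s := B) ▸ card_lt_card hBW
    obtain ⟨C, rfl⟩ := hW.exists_eq_map f (by have := hB.card_pos; omega)
    exact hmax C (map_ssubset_map.1 hBW) ((blockCand_map_iff f).1 hW)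

end Map

section Relabel

variable {m n k : ℕ}

def mapEdges (f : Fin m ↪ Fin n) (E : Finset (Finset (Fin m))) : Finset (Finset (Fin n)) :=
  E.map (mapEmbedding f).toEmbedding

def comapEdges (f : Fin m ↪ Fin n) (E : Finset (Finset (Fin n))) : Finset (Finset (Fin m)) :=
  univ.filter fun e => e.map f ∈ E

variable (f : Fin m ↪ Fin n)

@[simp]
lemma mem_mapEdges {E : Finset (Finset (Fin m))} {e : Finset (Fin n)} :
    e ∈ mapEdges f E ↔ ∃ e' ∈ E, e'.map f = e := by
  simp [mapEdges]

@[simp]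
lemma mem_comapEdges {E : Finset (Finset (Fin n))} {e : Finset (Fin m)} :
    e ∈ comapEdges f E ↔ e.map f ∈ E := by
  simp [comapEdges]

lemma graphOf_mapEdges (E : Finset (Finset (Fin m))) :
    graphOf n (mapEdges f E) = (graphOf m E).map f := by
  ext u v
  simp only [graphOf, mem_mapEdges, SimpleGraph.map_adj]
  constructor
  · rintro ⟨huv, e, he, hmap⟩
    obtain ⟨a, -, rfl⟩ := mem_map.1 (by rw [hmap]; exact mem_insert_self u {v} : u ∈ e.map f)
    obtain ⟨b, -, rfl⟩ := mem_map.1 (by rw [hmap]; simp : v ∈ e.map f)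
    refine ⟨a, b, ⟨fun h => huv (congrArg f h), ?_⟩, rfl, rfl⟩
    rwa [map_inj.1 (show ({a, b} : Finset (Fin m)).map f = e.map f by simp [hmap])]
  · rintro ⟨a, b, ⟨hab, he⟩, rfl, rfl⟩
    exact ⟨f.injective.ne hab, _, he, by simp⟩

-- Vertices outside the range of `f` become isolated, i.e. singleton blocks, which `Σ` allows.
lemma inSigma_mapEdges_iff {E : Finset (Finset (Fin m))} :
    InSigma n k (mapEdges f E) ↔ InSigma m k E := by
  have hedges : IsGraphEdges n (mapEdges f E) ↔ IsGraphEdges m E := by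
    simp [IsGraphEdges]
  have hclique : ∀ B : Finset (Fin m), ((graphOf m E).map f).IsClique (B.map f : Set (Fin n)) ↔
      (graphOf m E).IsClique (B : Set (Fin m)) := by
    simp [coe_map]
  rw [InSigma, InSigma, hedges, graphOf_mapEdges]
  refine and_congr_right fun _ => ⟨fun h B hB => ?_, fun h W hW => ?_⟩
  · simpa [hclique] using h _ ((isBlock_map_iff f).2 hB)
  · by_cases h1 : #W = 1
    · exact Or.inl h1
    obtain ⟨B, rfl⟩ := hW.1.exists_eq_map f (hW.1.two_le_card h1)
    simpa [hclique] using h B ((isBlock_map_iff f).1 hW)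

lemma mapEdges_comapEdges (E : Finset (Finset (Fin n))) :
    mapEdges f (comapEdges f E) = E.filter (· ⊆ univ.map f) := by
  ext e
  simp only [mem_mapEdges, mem_comapEdges, mem_filter, subset_map_iff, subset_univ, true_and]
  constructor
  · rintro ⟨e', he', rfl⟩
    exact ⟨he', e', rfl⟩
  · rintro ⟨he, e', rfl⟩
    exact ⟨e', he, rfl⟩

lemma comapEdges_mono {E E' : Finset (Finset (Fin n))} (h : E ⊆ E') :
    comapEdges f E ⊆ comapEdges f E' :=
  fun e he => by simpa using h (by simpa using he)

end Relabel

section Restrict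

variable {n k : ℕ} {G H : Finset (Finset (Fin n))} {W B : Finset (Fin n)}

lemma graphOf_mono (h : H ⊆ G) : graphOf n H ≤ graphOf n G :=
  fun _ _ huv => ⟨huv.1, h huv.2⟩

lemma graphOf_filter_adj_iff {x y : Fin n} (hx : x ∈ W) (hy : y ∈ W) :
    (graphOf n (H.filter (· ⊆ W))).Adj x y ↔ (graphOf n H).Adj x y := by
  simp [graphOf, insert_subset_iff, hx, hy]

lemma blockCand_graphOf_filter_iff (hBW : B ⊆ W) :
    BlockCand (graphOf n (H.filter (· ⊆ W))) B ↔ BlockCand (graphOf n H) B :=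
  blockCand_congr fun _ hx _ hy => graphOf_filter_adj_iff (hBW hx) (hBW hy)

lemma BlockCand.subset_of_graphOf_filter (h : BlockCand (graphOf n (H.filter (· ⊆ W))) B)
    (hB : 2 ≤ #B) : B ⊆ W := fun x hx => by
  obtain ⟨y, -, -, hxy⟩ := h.exists_adj hB hx
  exact (mem_filter.1 hxy).2 (mem_insert_self x {y})

lemma isBlock_graphOf_filter_iff (hHG : H ⊆ G) (hW : IsBlock (graphOf n G) W) (hB : 2 ≤ #B) :
    IsBlock (graphOf n (H.filter (· ⊆ W))) B ↔ IsBlock (graphOf n H) B ∧ B ⊆ W := by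
  constructor
  · rintro ⟨hcand, hmax⟩
    have hBW := hcand.subset_of_graphOf_filter hB
    refine ⟨⟨(blockCand_graphOf_filter_iff hBW).1 hcand, fun C hBC hC => ?_⟩, hBW⟩
    obtain ⟨W', hCW', hW'⟩ := (hC.mono (graphOf_mono hHG)).exists_isBlock_superset
    have hCW : C ⊆ W := hW.eq_of_subset hW' hB hBW (hBC.subset.trans hCW') ▸ hCW'
    exact hmax C hBC ((blockCand_graphOf_filter_iff hCW).2 hC)
  · rintro ⟨⟨hcand, hmax⟩, hBW⟩
    exact ⟨(blockCand_graphOf_filter_iff hBW).2 hcand,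
      fun C hBC hC => hmax C hBC (hC.mono (graphOf_mono (filter_subset _ _)))⟩

lemma inSigma_iff_forall_isBlock (hG : IsGraphEdges n G) (hHG : H ⊆ G) :
    InSigma n k H ↔ ∀ W, IsBlock (graphOf n G) W → InSigma n k (H.filter (· ⊆ W)) := by
  have hclique : ∀ {W B : Finset (Fin n)}, B ⊆ W →
      ((graphOf n (H.filter (· ⊆ W))).IsClique (B : Set (Fin n)) ↔
        (graphOf n H).IsClique (B : Set (Fin n))) := fun hBW =>
    ⟨fun h => h.mono (graphOf_mono (filter_subset _ _)),
      fun h x hx y hy hxy => (graphOf_filter_adj_iff (hBW hx) (hBW hy)).2 (h hx hy hxy)⟩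
  constructor
  · intro hH W hW
    refine ⟨fun e he => hH.1 e (mem_filter.1 he).1, fun B hB => ?_⟩
    by_cases h1 : #B = 1
    · exact Or.inl h1
    obtain ⟨hBH, hBW⟩ := (isBlock_graphOf_filter_iff hHG hW (hB.1.two_le_card h1)).1 hB
    rw [hclique hBW]
    exact hH.2 B hBH
  · intro h
    refine ⟨fun e he => hG e (hHG he), fun B hB => ?_⟩
    by_cases h1 : #B = 1
    · exact Or.inl h1
    obtain ⟨W, hBW, hW⟩ := (hB.1.mono (graphOf_mono hHG)).exists_isBlock_superset
    have hBblock := (isBlock_graphOf_filter_iff hHG hW (hB.1.two_le_card h1)).2 ⟨hB, hBW⟩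
    rw [← hclique hBW]
    exact (h W hW).2 B hBblock

lemma exists_isBlock_of_mem (hG : IsGraphEdges n G) {e : Finset (Fin n)} (he : e ∈ G) :
    ∃ W, IsBlock (graphOf n G) W ∧ e ⊆ W := by
  obtain ⟨u, v, huv, rfl⟩ := card_eq_two.1 (hG e he)
  exact exists_isBlock_of_adj ⟨huv, he⟩

end Restrict

theorem Finset.eq_of_sum_filter_subset_eq_zero {α M : Type*} [Fintype α] [DecidableEq α]
    [AddCommGroup M] (P : Finset α → Prop) [DecidablePred P] {f g : Finset α → M} {G : Finset α}
    (hG : P G) (h₀ : f ∅ = g ∅)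
    (hf : ∀ F ⊆ G, P F → F ≠ ∅ → ∑ H ∈ univ.filter (fun H => P H ∧ H ⊆ F), f H = 0)
    (hg : ∀ F ⊆ G, P F → F ≠ ∅ → ∑ H ∈ univ.filter (fun H => P H ∧ H ⊆ F), g H = 0) :
    f G = g G := by
  suffices ∀ F ⊆ G, P F → f F = g F from this G subset_rfl hG
  intro F
  induction F using Finset.strongInduction with
  | H F ih =>
  intro hFG hF
  rcases eq_or_ne F ∅ with rfl | hne
  · exact h₀
  have hmem : F ∈ univ.filter (fun H => P H ∧ H ⊆ F) := by simp [hF]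
  have hrest : ∑ H ∈ (univ.filter (fun H => P H ∧ H ⊆ F)).erase F, f H =
      ∑ H ∈ (univ.filter (fun H => P H ∧ H ⊆ F)).erase F, g H := by
    refine sum_congr rfl fun H hH => ?_
    obtain ⟨hHF, hH, hHsub⟩ : H ≠ F ∧ P H ∧ H ⊆ F := by simpa using hH
    exact ih H (ssubset_of_subset_of_ne hHsub hHF) (hHsub.trans hFG) hH
  have hfF := hf F hFG hF hne
  have hgF := hg F hFG hF hne
  rw [← add_sum_erase _ _ hmem, hrest] at hfF
  rw [← add_sum_erase _ _ hmem] at hgF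
  exact add_right_cancel (hfF.trans hgF.symm)

section BlockDecomposition

open scoped Classical

variable {n k : ℕ} {G H F : Finset (Finset (Fin n))} {W : Finset (Fin n)}

def blockEmb (W : Finset (Fin n)) : Fin #W ↪ Fin n :=
  (W.orderEmbOfFin rfl).toEmbedding

lemma map_univ_blockEmb (W : Finset (Fin n)) : univ.map (blockEmb W) = W :=
  map_orderEmbOfFin_univ W rfl

lemma map_blockEmb_subset (e : Finset (Fin #W)) : e.map (blockEmb W) ⊆ W := by
  simpa only [map_univ_blockEmb] using (map_subset_map (f := blockEmb W)).2 (subset_univ e)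

lemma mapEdges_comapEdges_blockEmb (W : Finset (Fin n)) (H : Finset (Finset (Fin n))) :
    mapEdges (blockEmb W) (comapEdges (blockEmb W) H) = H.filter (· ⊆ W) := by
  rw [mapEdges_comapEdges, map_univ_blockEmb]

lemma comapEdges_blockEmb_ne_empty {e : Finset (Fin n)} (he : e ∈ F) (heW : e ⊆ W) :
    comapEdges (blockEmb W) F ≠ ∅ := by
  intro h
  have : e ∈ mapEdges (blockEmb W) (comapEdges (blockEmb W) F) := by
    rw [mapEdges_comapEdges_blockEmb]
    exact mem_filter.2 ⟨he, heW⟩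
  simp [h, mapEdges] at this

lemma comapEdges_blockEmb_self (hG : InSigma n k G) (hW : IsBlock (graphOf n G) W) :
    comapEdges (blockEmb W) G = completeEdges #W := by
  ext e
  rw [mem_comapEdges, completeEdges, mem_powersetCard, and_iff_right (subset_univ e)]
  refine ⟨fun he => by simpa using hG.1 _ he, fun he => ?_⟩
  obtain ⟨a, b, hab, rfl⟩ := card_eq_two.1 he
  rcases hG.2 W hW with h1 | ⟨-, hclique⟩
  · exact absurd (Fin.ext (by omega)) hab
  · have hsub := map_blockEmb_subset (W := W) {a, b}
    simp only [map_insert, map_singleton, insert_subset_iff, singleton_subset_iff] at hsub ⊢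
    exact (hclique hsub.1 hsub.2 ((blockEmb W).injective.ne hab)).2

noncomputable def blocks (G : Finset (Finset (Fin n))) : Finset (Finset (Fin n)) :=
  univ.filter (IsBlock (graphOf n G))

lemma mem_blocks : W ∈ blocks G ↔ IsBlock (graphOf n G) W := by
  simp [blocks]

lemma inSigma_iff_forall_mem_blocks (hG : IsGraphEdges n G) (hHG : H ⊆ G) :
    InSigma n k H ↔ ∀ W ∈ blocks G, InSigma #W k (comapEdges (blockEmb W) H) := by
  simp only [mem_blocks, ← inSigma_mapEdges_iff (blockEmb _), mapEdges_comapEdges_blockEmb]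
  exact inSigma_iff_forall_isBlock hG hHG

noncomputable def glueBlocks (G : Finset (Finset (Fin n)))
    (p : ∀ W ∈ blocks G, Finset (Finset (Fin #W))) : Finset (Finset (Fin n)) :=
  (blocks G).attach.biUnion fun W => mapEdges (blockEmb W.1) (p W.1 W.2)

lemma glueBlocks_comapEdges (hG : IsGraphEdges n G) (hHG : H ⊆ G) :
    glueBlocks G (fun W _ => comapEdges (blockEmb W) H) = H := by
  ext e
  simp only [glueBlocks, mem_biUnion, mem_attach, true_and, Subtype.exists,
    mapEdges_comapEdges_blockEmb, mem_filter, mem_blocks]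
  refine ⟨fun ⟨_, _, he, _⟩ => he, fun he => ?_⟩
  obtain ⟨W, hW, heW⟩ := exists_isBlock_of_mem hG (hHG he)
  exact ⟨W, hW, he, heW⟩

lemma comapEdges_glueBlocks {p : ∀ W ∈ blocks G, Finset (Finset (Fin #W))}
    (hp : ∀ W hW, IsGraphEdges #W (p W hW)) (hW : W ∈ blocks G) :
    comapEdges (blockEmb W) (glueBlocks G p) = p W hW := by
  ext e
  simp only [mem_comapEdges, glueBlocks, mem_biUnion, mem_attach, true_and, Subtype.exists,
    mem_mapEdges]
  constructor
  · rintro ⟨W', hW', e', he', hmap⟩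
    obtain rfl : W' = W := (mem_blocks.1 hW').eq_of_subset (mem_blocks.1 hW)
      (by rw [← hmap, card_map, hp W' hW' e' he']) (hmap ▸ map_blockEmb_subset e')
      (map_blockEmb_subset e)
    rwa [← map_inj.1 hmap]
  · exact fun he => ⟨W, hW, e, he, rfl⟩

lemma glueBlocks_mono {p q : ∀ W ∈ blocks G, Finset (Finset (Fin #W))}
    (h : ∀ W hW, p W hW ⊆ q W hW) : glueBlocks G p ⊆ glueBlocks G q :=
  biUnion_mono fun W _ => map_subset_map.2 (h W.1 W.2)

lemma sum_prod_comapEdges_eq_prod_sum {R : Type*} [CommSemiring R] (hG : IsGraphEdges n G)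
    (hFG : F ⊆ G) (f : ∀ m, Finset (Finset (Fin m)) → R) :
    ∑ H ∈ univ.filter (fun H => InSigma n k H ∧ H ⊆ F),
        ∏ W ∈ blocks G, f #W (comapEdges (blockEmb W) H) =
      ∏ W ∈ blocks G, ∑ H ∈ univ.filter
        (fun H => InSigma #W k H ∧ H ⊆ comapEdges (blockEmb W) F), f #W H := by
  rw [prod_sum]
  refine sum_nbij' (fun H W _ => comapEdges (blockEmb W) H) (glueBlocks G) ?_ ?_ ?_ ?_ ?_
  · intro H hH
    obtain ⟨hH, hHF⟩ : InSigma n k H ∧ H ⊆ F := by simpa using hH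
    simp only [mem_pi, mem_filter, mem_univ, true_and]
    exact fun W hW => ⟨(inSigma_iff_forall_mem_blocks hG (hHF.trans hFG)).1 hH W hW,
      comapEdges_mono _ hHF⟩
  · intro p hp
    simp only [mem_pi, mem_filter, mem_univ, true_and] at hp
    have hpF : glueBlocks G p ⊆ F :=
      (glueBlocks_mono fun W hW => (hp W hW).2).trans (glueBlocks_comapEdges hG hFG).le
    simp only [mem_filter, mem_univ, true_and]
    refine ⟨(inSigma_iff_forall_mem_blocks hG (hpF.trans hFG)).2 fun W hW => ?_, hpF⟩
    rw [comapEdges_glueBlocks (fun W hW => (hp W hW).1.1) hW]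
    exact (hp W hW).1
  · intro H hH
    exact glueBlocks_comapEdges hG ((mem_filter.1 hH).2.2.trans hFG)
  · intro p hp
    simp only [mem_pi, mem_filter, mem_univ, true_and] at hp
    funext W hW
    exact comapEdges_glueBlocks (fun W hW => (hp W hW).1.1) hW
  · intro H _
    exact (prod_attach _ fun W => f #W (comapEdges (blockEmb W) H)).symm

end BlockDecomposition

open scoped Classical in
/-- `μ m` is `μ_{Σ_{m,k}}(0̂, ·)`, pinned down by its defining recurrence `hμbot`, `hμrec`. -/
theorem mobius_multiplicative_over_blocks_general (n k : ℕ)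
    (μ : ∀ m : ℕ, Finset (Finset (Fin m)) → ℤ)
    (hμbot : ∀ m : ℕ, μ m (∅ : Finset (Finset (Fin m))) = 1)
    (hμrec : ∀ (m : ℕ) (F : Finset (Finset (Fin m))), InSigma m k F → F ≠ ∅ →
      ∑ H ∈ Finset.univ.filter
          (fun H : Finset (Finset (Fin m)) => InSigma m k H ∧ H ⊆ F), μ m H = 0)
    (G : Finset (Finset (Fin n))) (hG : InSigma n k G) :
    μ n G = ∏ W ∈ Finset.univ.filter
        (fun W : Finset (Fin n) => IsBlock (graphOf n G) W),
      μ W.card (completeEdges W.card) := by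
  have hν : ∀ F ⊆ G, InSigma n k F → F ≠ ∅ → ∑ H ∈ univ.filter (fun H => InSigma n k H ∧ H ⊆ F),
      ∏ W ∈ blocks G, μ #W (comapEdges (blockEmb W) H) = 0 := by
    intro F hFG hF hne
    obtain ⟨e, he⟩ := nonempty_iff_ne_empty.2 hne
    obtain ⟨W, hW, heW⟩ := exists_isBlock_of_mem hG.1 (hFG he)
    rw [sum_prod_comapEdges_eq_prod_sum hG.1 hFG]
    exact prod_eq_zero (mem_blocks.2 hW) (hμrec _ _
      ((inSigma_iff_forall_mem_blocks hG.1 hFG).1 hF W (mem_blocks.2 hW))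
      (comapEdges_blockEmb_ne_empty he heW))
  calc μ n G = ∏ W ∈ blocks G, μ #W (comapEdges (blockEmb W) G) :=
        eq_of_sum_filter_subset_eq_zero (InSigma n k) hG (by simp [comapEdges, hμbot])
          (fun F _ => hμrec n F) hν
    _ = _ := prod_congr rfl fun W hW => by rw [comapEdges_blockEmb_self hG (mem_blocks.1 hW)]

open scoped Classical in
/-- Multiplicativity of the Möbius function of `Σ_{n,k}` over the blocks of a
connected graph: `μ_{Σ_{n,k}}(0̂, G) = Π_i μ_{Σ_{w_i,k}}(0̂, 1̂)` where `w_1,…,w_r`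
are the sizes of the blocks of `G`.  Here the Möbius functions are encoded by a
family `μ m : Finset (Finset (Fin m)) → ℤ` (`μ m F = μ_{Σ_{m,k}}(0̂, F)`) subject to
the defining recurrence `μ(0̂,0̂) = 1` and `Σ_{0̂ ≤ H ≤ F} μ(0̂,H) = 0` for `0̂ < F`
in `Σ_{m,k}`, which determines it uniquely. -/
theorem mobius_multiplicative_over_blocks (n k : ℕ) (hk : 2 ≤ k) (hn : 2 ≤ n)
    (μ : ∀ m : ℕ, Finset (Finset (Fin m)) → ℤ)
    (hμbot : ∀ m : ℕ, μ m (∅ : Finset (Finset (Fin m))) = 1)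
    (hμrec : ∀ (m : ℕ) (F : Finset (Finset (Fin m))), InSigma m k F → F ≠ ∅ →
      ∑ H ∈ Finset.univ.filter
          (fun H : Finset (Finset (Fin m)) => InSigma m k H ∧ H ⊆ F), μ m H = 0)
    (G : Finset (Finset (Fin n))) (hG : InSigma n k G)
    (hconn : (graphOf n G).Connected) :
    μ n G = ∏ W ∈ Finset.univ.filter
        (fun W : Finset (Fin n) => IsBlock (graphOf n G) W),
      μ W.card (completeEdges W.card) :=
  mobius_multiplicative_over_blocks_general n k μ hμbot hμrec G hG
end

section
/- Let n ≥ 2 and let G be a simple graph on [n] = {1,…,n}. Then G is (n−2)-connected if and only if the complement of G is a matching, i.e., every vertex of [n] belongs to at most one 2-element subset of [n] that is not an edge of G (every vertex has degree at most 1 in the complement graph). (This is the combinatorial content of the statement that the matching complex M_n is the Alexander dual of the complex Δ_n^{n−2} of not (n−2)-connected graphs.) -/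
/-!
Removing `n - 3` vertices leaves three, and three vertices `v, a, b` induce a connected graph
only if `v` is adjacent to `a` or `b`; so `(n - 2)`-connectivity forbids two non-neighbours.
Conversely, if non-adjacency is a matching, any two non-adjacent vertices `x, y` of a set of
at least three vertices have a common neighbour `z` in it: every other vertex of the set.
-/

open Finset

namespace SimpleGraph

variable {V : Type} {G : SimpleGraph V}

theorem exists_adj_of_induce_connected {s : Set V} (hs : (G.induce s).Connected) {v w : V}
    (hv : v ∈ s) (hw : w ∈ s) (hvw : v ≠ w) : ∃ u ∈ s, G.Adj v u := by
  have : Nontrivial s := ⟨⟨v, hv⟩, ⟨w, hw⟩, by simpa using hvw⟩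
  obtain ⟨u, hu⟩ := hs.preconnected.exists_adj_of_nontrivial ⟨v, hv⟩
  exact ⟨u, u.2, hu⟩

theorem adj_of_compl_adj_of_ne (hG : ∀ v, (Gᶜ.neighborSet v).Subsingleton) {x y z : V}
    (hxy : Gᶜ.Adj x y) (hzx : z ≠ x) (hzy : z ≠ y) : G.Adj x z := by
  by_contra hxz
  exact hzy (hG x ⟨hzx.symm, hxz⟩ hxy)

theorem induce_connected_of_two_lt_ncard (hG : ∀ v, (Gᶜ.neighborSet v).Subsingleton)
    {s : Set V} (hs : 2 < s.ncard) : (G.induce s).Connected := by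
  have : Nonempty s := (Set.nonempty_of_ncard_ne_zero (by omega)).to_subtype
  refine ⟨fun x y => ?_⟩
  obtain ⟨z, hzs, hzxy⟩ := Set.exists_mem_notMem_of_ncard_lt_ncard
    ((Set.ncard_insert_le _ _).trans_lt (by simpa using hs) : ({x.1, y.1} : Set V).ncard < _)
  simp only [Set.mem_insert_iff, Set.mem_singleton_iff, not_or] at hzxy
  obtain ⟨hzx, hzy⟩ := hzxy
  by_cases hxy : x = y
  · rw [hxy]
  by_cases hadj : G.Adj x y
  · exact Adj.reachable (G := G.induce s) hadj
  have hcompl : Gᶜ.Adj x y := ⟨fun h => hxy (Subtype.ext h), hadj⟩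
  have hxz : G.Adj x z := adj_of_compl_adj_of_ne hG hcompl hzx hzy
  have hyz : G.Adj y z := adj_of_compl_adj_of_ne hG hcompl.symm hzy hzx
  exact (Adj.reachable (G := G.induce s) (v := ⟨z, hzs⟩) hxz).trans
    (Adj.reachable (G := G.induce s) hyz.symm)

end SimpleGraph

open SimpleGraph in
theorem isIConn_card_sub_two_iff {V : Type} [Fintype V] [DecidableEq V]
    (hV : 2 ≤ Fintype.card V) (G : SimpleGraph V) :
    IsIConn (Fintype.card V - 2) G ↔ ∀ v, (Gᶜ.neighborSet v).Subsingleton := by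
  constructor
  · rintro ⟨-, hconn⟩ v a ⟨hva, hGa⟩ b ⟨hvb, hGb⟩
    by_contra hab
    have hT : ({v, a, b} : Finset V).card = 3 := by
      rw [card_insert_of_notMem (by simp [hva, hvb]), card_pair hab]
    have hcard : ({v, a, b} : Finset V)ᶜ.card < Fintype.card V - 2 := by
      have := card_le_univ ({v, a, b} : Finset V)
      rw [card_compl]
      omega
    have hc := hconn _ hcard
    rw [coe_compl, compl_compl] at hc
    obtain ⟨u, hu, hvu⟩ := exists_adj_of_induce_connected hc (by simp) (by simp) hva
    simp only [coe_insert, coe_singleton, Set.mem_insert_iff, Set.mem_singleton_iff] at hu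
    rcases hu with rfl | rfl | rfl
    exacts [G.loopless.irrefl _ hvu, hGa hvu, hGb hvu]
  · refine fun hG => ⟨by omega, fun S hS => induce_connected_of_two_lt_ncard hG ?_⟩
    rw [← coe_compl, Set.ncard_coe_finset, card_compl]
    omega

/-- A graph on `[n]` (`n ≥ 2`) is `(n-2)`-connected iff its complement is a matching,
i.e. every vertex has degree at most 1 in the complement graph. -/
theorem n_minus_two_connected_iff_complement_matching (n : ℕ) (hn : 2 ≤ n)
    (G : SimpleGraph (Fin n)) :
    IsIConn (n - 2) G ↔ ∀ v : Fin n, (Gᶜ.neighborSet v).ncard ≤ 1 := by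
  simpa using isIConn_card_sub_two_iff (by simpa using hn) G
end
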